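/- arXiv:1209.5557 — 7 statements merged into one kernel-verified Lean document; each statement's English description precedes it below -/
import Mathlib

section
/- If A is a family of permutations in S_n such that any two permutations in A agree at some point (i.e., A is intersecting), then |A| ≤ (n-1)!. -/
/-!
Let `H` be the cyclic group generated by an `n`-cycle. Every nontrivial element of `H` is
fixed-point-free, so two distinct permutations in the same left coset `σH` agree nowhere. An
intersecting family therefore meets each of the `n! / n = (n - 1)!` cosets at most once.
-/

open Finset Nat

namespace Equiv.Perm

variable {α : Type*}

def Intersecting (A : Set (Perm α)) : Prop :=
  ∀ σ ∈ A, ∀ π ∈ A, ∃ i, σ i = π i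

theorem Intersecting.card_mul_card_le_factorial [Finite α] {A : Finset (Perm α)}
    (hA : Intersecting (A : Set (Perm α))) {H : Subgroup (Perm α)}
    (hH : ∀ h ∈ H, ∀ x, h x = x → h = 1) :
    #A * Nat.card H ≤ (Nat.card α)! := by
  classical
  have : Fintype α := Fintype.ofFinite α
  have hinj : Set.InjOn (QuotientGroup.mk : Perm α → Perm α ⧸ H) A := by
    intro σ hσ π hπ hσπ
    obtain ⟨i, hi⟩ := hA σ hσ π hπ
    refine inv_mul_eq_one.mp (hH _ (QuotientGroup.eq.mp hσπ) i ?_)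
    rw [Perm.mul_apply, inv_eq_iff_eq, hi]
  calc #A * Nat.card H ≤ H.index * Nat.card H := by
        gcongr
        simpa [Subgroup.index, Nat.card_eq_fintype_card] using
          card_le_card_of_injOn _ (fun _ _ ↦ mem_univ _) hinj
    _ = (Nat.card α)! := by rw [mul_comm, H.card_mul_index, Nat.card_perm]

theorem IsCycle.eq_one_of_mem_zpowers [Finite α] {f : Perm α} (hf : IsCycle f)
    (hmoved : ∀ x, f x ≠ x) {g : Perm α} (hg : g ∈ Subgroup.zpowers f) {x : α}
    (hx : g x = x) : g = 1 := by
  obtain ⟨k, rfl⟩ := mem_powers_iff_mem_zpowers.mpr hg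
  exact (hf.pow_eq_one_iff' (hmoved x)).mpr hx

theorem Intersecting.card_mul_card_le_factorial_of_isCycle [Fintype α] [DecidableEq α]
    {A : Finset (Perm α)} (hA : Intersecting (A : Set (Perm α))) {f : Perm α} (hf : IsCycle f)
    (hsupp : f.support = univ) :
    #A * Fintype.card α ≤ (Fintype.card α)! := by
  have hmoved (x : α) : f x ≠ x := mem_support.mp (hsupp ▸ mem_univ x)
  have hcard : Nat.card (Subgroup.zpowers f) = Fintype.card α := by
    rw [Nat.card_zpowers, hf.orderOf, hsupp, Finset.card_univ]
  simpa only [hcard, Nat.card_eq_fintype_card] using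
    hA.card_mul_card_le_factorial fun _ hg _ hx ↦ hf.eq_one_of_mem_zpowers hmoved hg hx

end Equiv.Perm

theorem deza_frankl (n : ℕ) (A : Finset (Equiv.Perm (Fin n)))
    (hA : ∀ σ ∈ A, ∀ π ∈ A, ∃ i : Fin n, σ i = π i) :
    A.card ≤ (n - 1)! := by
  rcases lt_or_ge n 2 with hn | hn
  · calc A.card ≤ Fintype.card (Equiv.Perm (Fin n)) := card_le_univ A
      _ = (n - 1)! := by interval_cases n <;> rfl
  · obtain ⟨m, rfl⟩ : ∃ m, n = m + 1 := ⟨n - 1, by omega⟩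
    have key := Equiv.Perm.Intersecting.card_mul_card_le_factorial_of_isCycle hA
      (isCycle_finRotate_of_le hn) (support_finRotate_of_le hn)
    rw [Fintype.card_fin, factorial_succ, mul_comm (m + 1)] at key
    exact Nat.le_of_mul_le_mul_right key m.succ_pos
end

section
/- For n ≥ 2, the number of permutations σ ∈ S_n with σ(1) = 1 which agree at some point with the transposition (1 2) equals (n-1)! - d_{n-1} - d_{n-2}, where d_k is the number of derangements of [k]. -/
/-!
A permutation `σ` fixing `a` agrees with `swap a b` exactly when it fixes some point other
than `a` and `b`. Forgetting `a`, such `σ` are the permutations of the remaining `n - 1`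
points that have a fixed point other than `b`. Their complement, the permutations whose only
possible fixed point is `b`, splits into derangements of all `n - 1` points and derangements
of the `n - 2` points other than `b`.
-/

open Finset Nat

namespace Equiv.Perm

theorem exists_apply_eq_swap_apply_iff {α : Type*} [DecidableEq α] {σ : Perm α} {a b : α}
    (hab : a ≠ b) (ha : σ a = a) :
    (∃ i, σ i = swap a b i) ↔ ∃ i ≠ a, i ≠ b ∧ σ i = i := by
  constructor
  · rintro ⟨i, hi⟩
    rcases eq_or_ne i a with rfl | hia
    · exact absurd (ha.symm.trans (hi.trans (swap_apply_left i b))) hab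
    rcases eq_or_ne i b with rfl | hib
    · exact absurd (σ.injective (hi.trans ((swap_apply_right a i).trans ha.symm))) hab.symm
    · exact ⟨i, hia, hib, hi.trans (swap_apply_of_ne_of_ne hia hib)⟩
  · rintro ⟨i, hia, hib, hi⟩
    exact ⟨i, hi.trans (swap_apply_of_ne_of_ne hia hib).symm⟩

variable {α : Type*} [Fintype α] [DecidableEq α]

theorem card_forall_fixed_eq (a : α) :
    Fintype.card {f : Perm α // ∀ x, f x = x → x = a} =
      numDerangements (Fintype.card α - 1) + numDerangements (Fintype.card α) := by
  calc Fintype.card {f : Perm α // ∀ x, f x = x → x = a}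
      = Fintype.card (derangements ({a}ᶜ : Set α) ⊕ derangements α) :=
        Fintype.card_congr <| (subtypeEquivRight fun _ => Iff.rfl).trans
          (derangements.atMostOneFixedPointEquivSum_derangements a)
    _ = _ := by
      rw [Fintype.card_sum, card_derangements_eq_numDerangements,
        card_derangements_eq_numDerangements, Fintype.card_compl_set, Set.card_singleton]

theorem card_exists_fixed_ne (a : α) :
    (Fintype.card {f : Perm α // ∃ x ≠ a, f x = x} : ℤ) =
      (Fintype.card α)! - numDerangements (Fintype.card α) -
        numDerangements (Fintype.card α - 1) := by
  have hcompl : Fintype.card {f : Perm α // ¬∃ x ≠ a, f x = x} =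
      Fintype.card {f : Perm α // ∀ x, f x = x → x = a} :=
    Fintype.card_congr <| subtypeEquivRight fun f => by simp [not_imp_not]
  have hsum := Fintype.card_congr (sumCompl fun f : Perm α => ∃ x ≠ a, f x = x)
  rw [Fintype.card_sum, hcompl, card_forall_fixed_eq, Fintype.card_perm] at hsum
  omega

def permSubtypeNeEquivFixing (a : α) : Perm {x // x ≠ a} ≃ {σ : Perm α // σ a = a} :=
  (Perm.subtypeEquivSubtypePerm (· ≠ a)).trans (subtypeEquivRight fun σ => by simp)

theorem card_fixing_and_exists_fixed_ne (a b : α) (hba : b ≠ a) :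
    Fintype.card {σ : Perm α // σ a = a ∧ ∃ x ≠ a, x ≠ b ∧ σ x = x} =
      Fintype.card {τ : Perm {x // x ≠ a} // ∃ y ≠ ⟨b, hba⟩, τ y = y} := by
  refine (Fintype.card_congr ((subtypeEquiv (permSubtypeNeEquivFixing a) fun τ => ?_).trans
    (subtypeSubtypeEquivSubtypeInter _ _))).symm
  have happly (y : {x // x ≠ a}) : ((permSubtypeNeEquivFixing a τ : Perm α) y) = τ y :=
    subtypeEquivSubtypePerm_apply_of_mem τ y.2
  constructor
  · rintro ⟨y, hyb, hy⟩
    exact ⟨y, y.2, fun h => hyb (Subtype.ext h), (happly y).trans (congrArg Subtype.val hy)⟩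
  · rintro ⟨x, hxa, hxb, hx⟩
    refine ⟨⟨x, hxa⟩, fun h => hxb (congrArg Subtype.val h), Subtype.ext ?_⟩
    exact (happly ⟨x, hxa⟩).symm.trans hx

theorem card_fixing_and_exists_apply_eq_swap_apply {a b : α} (hab : a ≠ b) :
    (#{σ : Perm α | σ a = a ∧ ∃ i, σ i = swap a b i} : ℤ) =
      (Fintype.card α - 1)! - numDerangements (Fintype.card α - 1) -
        numDerangements (Fintype.card α - 2) := by
  rw [← Fintype.card_subtype, Fintype.card_congr (subtypeEquivRight fun σ =>
      and_congr_right (exists_apply_eq_swap_apply_iff hab)),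
    card_fixing_and_exists_fixed_ne a b hab.symm, card_exists_fixed_ne,
    Fintype.card_subtype_compl, Fintype.card_subtype_eq]
  rfl

end Equiv.Perm

theorem count_fixing_one_and_agreeing_with_transposition (n : ℕ) (hn : 2 ≤ n) :
    ((Finset.univ.filter (fun σ : Equiv.Perm (Fin n) =>
        σ ⟨0, by omega⟩ = ⟨0, by omega⟩ ∧
        ∃ i : Fin n, σ i = Equiv.swap (⟨0, by omega⟩ : Fin n) ⟨1, by omega⟩ i)).card : ℤ) =
      ((n - 1)! : ℤ) - numDerangements (n - 1) - numDerangements (n - 2) := by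
  have h := Equiv.Perm.card_fixing_and_exists_apply_eq_swap_apply (α := Fin n)
    (a := ⟨0, by omega⟩) (b := ⟨1, by omega⟩) (by simp)
  rw [Fintype.card_fin] at h
  -- `h` decides the `∃` over `Fin n` by `Fintype.decidableExistsFintype`, the goal by
  -- `decidableExistsFin`
  convert h
end

section
/- Let G = (V,E) be a graph with Laplacian eigenvalues 0 = μ₁ ≤ μ₂ ≤ ... ≤ μ_{|V|}, let M = min{i : μ_i > μ₂}, and let U be the direct sum of the μ₁- and μ₂-eigenspaces of the Laplacian L. If S ⊆ V satisfies e(S, Sᶜ) ≤ μ₂·|S||Sᶜ|/|V| + γ|S| for some γ ≥ 0, then ‖𝟙_S − P_U(𝟙_S)‖² ≤ (γ/(μ_M − μ₂)) · |S|/|V|, where the norm is induced by the inner product ⟨f,g⟩ = (1/|V|)∑_{v∈V} f(v)g(v) and P_U is orthogonal projection onto U. -/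
/-!
Expand `𝟙_S` in an orthonormal eigenbasis `(bᵢ)` of `L`, with coefficients `dᵢ`. Then
`e(S, Sᶜ) = ⟨𝟙_S, L 𝟙_S⟩ = ∑ λᵢ dᵢ²` and `|S| = ∑ dᵢ²`, while `g = 𝟙_S - P_U 𝟙_S` has coefficient
`dᵢ` at each eigenvalue above `μ₂` (all of which are at least `μ_M`) and `0` elsewhere. Comparing
coefficients away from the constant eigenvector, whose coefficient is `|S| / √|V|` as soon as
`μ₂ > 0`, gives `e(S, Sᶜ) ≥ μ₂ |S| |Sᶜ| / |V| + (μ_M - μ₂) ‖g‖²`; against the hypothesis on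
`e(S, Sᶜ)` this leaves `(μ_M - μ₂) ‖g‖² ≤ γ |S|`.
-/

open Finset Matrix

namespace Matrix.IsHermitian

variable {n : Type*} [Fintype n] [DecidableEq n] {A : Matrix n n ℝ} (hA : A.IsHermitian)

theorem sum_eigenvectorBasis_dotProduct_mul (x y : n → ℝ) :
    ∑ i, (⇑(hA.eigenvectorBasis i) ⬝ᵥ x) * (⇑(hA.eigenvectorBasis i) ⬝ᵥ y) = x ⬝ᵥ y := by
  simpa [EuclideanSpace.inner_eq_star_dotProduct, dotProduct_comm] using
    (hA.eigenvectorBasis).sum_inner_mul_inner (WithLp.toLp 2 x) (WithLp.toLp 2 y)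

theorem eigenvectorBasis_dotProduct_mulVec (i : n) (x : n → ℝ) :
    ⇑(hA.eigenvectorBasis i) ⬝ᵥ (A *ᵥ x) = hA.eigenvalues i * (⇑(hA.eigenvectorBasis i) ⬝ᵥ x) := by
  have hT : Aᵀ = A := by simpa using hA.eq
  rw [dotProduct_mulVec, ← mulVec_transpose, hT, hA.mulVec_eigenvectorBasis, smul_dotProduct,
    smul_eq_mul]

theorem dotProduct_mulVec_self_eq_sum (x : n → ℝ) :
    x ⬝ᵥ (A *ᵥ x) = ∑ i, hA.eigenvalues i * (⇑(hA.eigenvectorBasis i) ⬝ᵥ x) ^ 2 := by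
  rw [← hA.sum_eigenvectorBasis_dotProduct_mul]
  simp only [hA.eigenvectorBasis_dotProduct_mulVec]
  exact sum_congr rfl fun i _ => by ring

theorem eigenvectorBasis_mem_eigenspace (i : n) :
    ⇑(hA.eigenvectorBasis i) ∈ Module.End.eigenspace (toLin' A) (hA.eigenvalues i) := by
  rw [Module.End.mem_eigenspace_iff, toLin'_apply, hA.mulVec_eigenvectorBasis]

theorem eigenvectorBasis_dotProduct_eq_zero_of_mem_eigenspace {ν : ℝ} {i : n} {x : n → ℝ}
    (hx : x ∈ Module.End.eigenspace (toLin' A) ν) (hν : ν ≠ hA.eigenvalues i) :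
    ⇑(hA.eigenvectorBasis i) ⬝ᵥ x = 0 := by
  rw [Module.End.mem_eigenspace_iff, toLin'_apply] at hx
  have h := hA.eigenvectorBasis_dotProduct_mulVec i x
  rw [hx, dotProduct_smul, smul_eq_mul] at h
  exact (mul_eq_mul_right_iff.mp h).resolve_left hν

theorem eigenvectorBasis_dotProduct_eq_zero_of_mem_sup_eigenspace {ν₁ ν₂ : ℝ} {i : n} {x : n → ℝ}
    (hx : x ∈ Module.End.eigenspace (toLin' A) ν₁ ⊔ Module.End.eigenspace (toLin' A) ν₂)
    (h₁ : ν₁ ≠ hA.eigenvalues i) (h₂ : ν₂ ≠ hA.eigenvalues i) :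
    ⇑(hA.eigenvectorBasis i) ⬝ᵥ x = 0 := by
  obtain ⟨y, hy, z, hz, rfl⟩ := Submodule.mem_sup.mp hx
  rw [dotProduct_add, hA.eigenvectorBasis_dotProduct_eq_zero_of_mem_eigenspace hy h₁,
    hA.eigenvectorBasis_dotProduct_eq_zero_of_mem_eigenspace hz h₂, add_zero]

theorem eigenvectorBasis_dotProduct_eq_zero_of_forall_mem_sup {ν₁ ν₂ : ℝ} {i : n} {y : n → ℝ}
    (hy : ∀ u ∈ Module.End.eigenspace (toLin' A) ν₁ ⊔ Module.End.eigenspace (toLin' A) ν₂,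
      y ⬝ᵥ u = 0)
    (hi : hA.eigenvalues i = ν₁ ∨ hA.eigenvalues i = ν₂) :
    ⇑(hA.eigenvectorBasis i) ⬝ᵥ y = 0 := by
  rw [dotProduct_comm]
  refine hy _ ?_
  rcases hi with rfl | rfl
  · exact Submodule.mem_sup_left (hA.eigenvectorBasis_mem_eigenspace i)
  · exact Submodule.mem_sup_right (hA.eigenvectorBasis_mem_eigenspace i)

theorem eigenvectorBasis_dotProduct_sq_mul_dotProduct_self {i₀ : n} {u : n → ℝ}
    (hu : ∀ i ≠ i₀, ⇑(hA.eigenvectorBasis i) ⬝ᵥ u = 0) (x : n → ℝ) :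
    (⇑(hA.eigenvectorBasis i₀) ⬝ᵥ x) ^ 2 * (u ⬝ᵥ u) = (u ⬝ᵥ x) ^ 2 := by
  have hsum (y : n → ℝ) : u ⬝ᵥ y =
      (⇑(hA.eigenvectorBasis i₀) ⬝ᵥ u) * (⇑(hA.eigenvectorBasis i₀) ⬝ᵥ y) := by
    rw [← hA.sum_eigenvectorBasis_dotProduct_mul]
    exact sum_eq_single i₀ (fun i _ hi => by rw [hu i hi, zero_mul]) (by simp)
  rw [hsum u, hsum x]
  ring

/-- Coefficientwise, `λᵢ xᵢ² ≥ a xᵢ² + (c - a) yᵢ²` for `i ≠ i₀`, and `yᵢ₀ = 0`. -/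
theorem mul_dotProduct_self_add_le {a c : ℝ} {i₀ : n} {x y : n → ℝ}
    (h₀ : 0 ≤ hA.eigenvalues i₀) (h₀a : hA.eigenvalues i₀ ≤ a)
    (hle : ∀ i ≠ i₀, a ≤ hA.eigenvalues i) (hgap : ∀ i, a < hA.eigenvalues i → c ≤ hA.eigenvalues i)
    (hy_le : ∀ i, hA.eigenvalues i ≤ a → ⇑(hA.eigenvectorBasis i) ⬝ᵥ y = 0)
    (hy_lt : ∀ i, a < hA.eigenvalues i →
      ⇑(hA.eigenvectorBasis i) ⬝ᵥ y = ⇑(hA.eigenvectorBasis i) ⬝ᵥ x) :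
    a * (x ⬝ᵥ x) + (c - a) * (y ⬝ᵥ y) ≤
      x ⬝ᵥ (A *ᵥ x) + a * (⇑(hA.eigenvectorBasis i₀) ⬝ᵥ x) ^ 2 := by
  set ev := hA.eigenvalues
  set x' := fun i => ⇑(hA.eigenvectorBasis i) ⬝ᵥ x
  set y' := fun i => ⇑(hA.eigenvectorBasis i) ⬝ᵥ y
  have hterm (i : n) :
      a * x' i ^ 2 + (c - a) * y' i ^ 2 ≤ ev i * x' i ^ 2 + if i = i₀ then a * x' i ^ 2 else 0 := by
    rcases le_or_gt (ev i) a with hia | hai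
    · rw [show y' i = 0 from hy_le i hia]
      split_ifs with hi
      · nlinarith [mul_nonneg (h₀.trans_eq (congrArg ev hi.symm)) (sq_nonneg (x' i))]
      · nlinarith [le_antisymm hia (hle i hi)]
    · have hi : i ≠ i₀ := by rintro rfl; linarith
      rw [show y' i = x' i from hy_lt i hai, if_neg hi]
      nlinarith [hgap i hai, sq_nonneg (x' i)]
  calc a * (x ⬝ᵥ x) + (c - a) * (y ⬝ᵥ y)
      = ∑ i, (a * x' i ^ 2 + (c - a) * y' i ^ 2) := by
        simp only [← hA.sum_eigenvectorBasis_dotProduct_mul x x,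
          ← hA.sum_eigenvectorBasis_dotProduct_mul y y, mul_sum, ← sum_add_distrib, sq, x', y']
    _ ≤ ∑ i, (ev i * x' i ^ 2 + if i = i₀ then a * x' i ^ 2 else 0) := sum_le_sum fun i _ => hterm i
    _ = x ⬝ᵥ (A *ᵥ x) + a * x' i₀ ^ 2 := by
        rw [sum_add_distrib, sum_ite_eq', if_pos (mem_univ _), hA.dotProduct_mulVec_self_eq_sum]

theorem mul_dotProduct_self_add_le_of_orthogonal {a c : ℝ} {i₀ : n} {x P : n → ℝ}
    (h₀ : hA.eigenvalues i₀ = 0) (ha : 0 ≤ a) (hle : ∀ i ≠ i₀, a ≤ hA.eigenvalues i)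
    (hgap : ∀ i, a < hA.eigenvalues i → c ≤ hA.eigenvalues i)
    (hP : P ∈ Module.End.eigenspace (toLin' A) 0 ⊔ Module.End.eigenspace (toLin' A) a)
    (horth : ∀ u ∈ Module.End.eigenspace (toLin' A) 0 ⊔ Module.End.eigenspace (toLin' A) a,
      (x - P) ⬝ᵥ u = 0) :
    a * (x ⬝ᵥ x) + (c - a) * ((x - P) ⬝ᵥ (x - P)) ≤
      x ⬝ᵥ (A *ᵥ x) + a * (⇑(hA.eigenvectorBasis i₀) ⬝ᵥ x) ^ 2 := by
  refine hA.mul_dotProduct_self_add_le h₀.ge (h₀.trans_le ha) hle hgap (fun i hi => ?_)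
    fun i hi => ?_
  · refine hA.eigenvectorBasis_dotProduct_eq_zero_of_forall_mem_sup horth ?_
    by_cases hi₀ : i = i₀
    · exact .inl (hi₀ ▸ h₀)
    · exact .inr (le_antisymm hi (hle i hi₀))
  · rw [dotProduct_sub, hA.eigenvectorBasis_dotProduct_eq_zero_of_mem_sup_eigenspace hP
      (ha.trans_lt hi).ne hi.ne, sub_zero]

end Matrix.IsHermitian

namespace SimpleGraph

variable {V : Type*} [Fintype V] [DecidableEq V] (G : SimpleGraph V) [DecidableRel G.Adj]

theorem card_filter_adj_product_eq_sum (S T : Finset V) :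
    (#{p ∈ S ×ˢ T | G.Adj p.1 p.2} : ℝ) =
      ∑ i, ∑ j, if G.Adj i j ∧ i ∈ S ∧ j ∈ T then (1 : ℝ) else 0 := by
  have h : {p ∈ S ×ˢ T | G.Adj p.1 p.2} =
      ({p : V × V | G.Adj p.1 p.2 ∧ p.1 ∈ S ∧ p.2 ∈ T} : Finset (V × V)) := by
    ext; simp [and_comm]
  rw [h, card_filter, Fintype.sum_prod_type]
  push_cast
  rfl

theorem indicator_dotProduct_lapMatrix_mulVec (S : Finset V) :
    (fun v => if v ∈ S then (1 : ℝ) else 0) ⬝ᵥ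
        (G.lapMatrix ℝ *ᵥ fun v => if v ∈ S then (1 : ℝ) else 0) =
      #{p ∈ S ×ˢ Sᶜ | G.Adj p.1 p.2} := by
  rw [← toLinearMap₂'_apply', lapMatrix_toLinearMap₂', G.card_filter_adj_product_eq_sum]
  have hsq (i j : V) :
      (if G.Adj i j then ((if i ∈ S then (1 : ℝ) else 0) - if j ∈ S then 1 else 0) ^ 2 else 0) =
        (if G.Adj i j ∧ i ∈ S ∧ j ∈ Sᶜ then 1 else 0) +
          if G.Adj j i ∧ j ∈ S ∧ i ∈ Sᶜ then 1 else 0 := by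
    by_cases hi : i ∈ S <;> by_cases hj : j ∈ S <;> by_cases ha : G.Adj i j <;>
      simp [hi, hj, ha, G.adj_comm j i]
  simp only [hsq, sum_add_distrib]
  rw [sum_comm (f := fun i j => if G.Adj j i ∧ j ∈ S ∧ i ∈ Sᶜ then (1 : ℝ) else 0)]
  ring

/-- Once every eigenvalue but the `i₀`-th is at least `a > 0`, the `i₀`-th eigenvector spans the
kernel of the Laplacian, which contains the constant vectors. -/
theorem mul_eigenvectorBasis_dotProduct_sq_mul_card (hL : (G.lapMatrix ℝ).IsHermitian) {a : ℝ}
    (ha : 0 ≤ a) {i₀ : V} (hle : ∀ i ≠ i₀, a ≤ hL.eigenvalues i) (x : V → ℝ) :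
    a * (⇑(hL.eigenvectorBasis i₀) ⬝ᵥ x) ^ 2 * Fintype.card V = a * (∑ v, x v) ^ 2 := by
  rcases ha.eq_or_lt with rfl | hpos
  · simp
  have hconst : (1 : V → ℝ) ∈ Module.End.eigenspace (toLin' (G.lapMatrix ℝ)) 0 := by
    rw [Module.End.mem_eigenspace_iff, toLin'_apply, zero_smul]
    exact G.lapMatrix_mulVec_const_eq_zero
  have h := hL.eigenvectorBasis_dotProduct_sq_mul_dotProduct_self
    (fun i hi => hL.eigenvectorBasis_dotProduct_eq_zero_of_mem_eigenspace hconst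
      (hpos.trans_le (hle i hi)).ne) x
  rw [one_dotProduct_one, one_dotProduct] at h
  rw [mul_assoc, h]

theorem mul_card_mul_card_compl_div_add_le_card_cut (hL : (G.lapMatrix ℝ).IsHermitian)
    {a c : ℝ} {i₀ : V} (h₀ : hL.eigenvalues i₀ = 0) (ha : 0 ≤ a)
    (hle : ∀ i ≠ i₀, a ≤ hL.eigenvalues i) (hgap : ∀ i, a < hL.eigenvalues i → c ≤ hL.eigenvalues i)
    {S : Finset V} {P : V → ℝ}
    (hP : P ∈ Module.End.eigenspace (toLin' (G.lapMatrix ℝ)) 0 ⊔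
      Module.End.eigenspace (toLin' (G.lapMatrix ℝ)) a)
    (horth : ∀ u ∈ Module.End.eigenspace (toLin' (G.lapMatrix ℝ)) 0 ⊔
      Module.End.eigenspace (toLin' (G.lapMatrix ℝ)) a,
      ((fun v => if v ∈ S then (1 : ℝ) else 0) - P) ⬝ᵥ u = 0) :
    a * #S * #Sᶜ / Fintype.card V +
        (c - a) * (((fun v => if v ∈ S then (1 : ℝ) else 0) - P) ⬝ᵥ
          ((fun v => if v ∈ S then (1 : ℝ) else 0) - P)) ≤
      #{p ∈ S ×ˢ Sᶜ | G.Adj p.1 p.2} := by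
  set f : V → ℝ := fun v => if v ∈ S then 1 else 0
  have key := hL.mul_dotProduct_self_add_le_of_orthogonal h₀ ha hle hgap hP horth
  have hproj := G.mul_eigenvectorBasis_dotProduct_sq_mul_card hL ha hle f
  have hn : (0 : ℝ) < Fintype.card V := Nat.cast_pos.mpr (Fintype.card_pos_iff.mpr ⟨i₀⟩)
  have hff : f ⬝ᵥ f = #S := by simp [f, dotProduct]
  have hsum : ∑ v, f v = #S := by simp [f]
  have hSc : (#Sᶜ : ℝ) = Fintype.card V - #S := by
    rw [card_compl, Nat.cast_sub (card_le_univ S)]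
  rw [G.indicator_dotProduct_lapMatrix_mulVec, hff] at key
  rw [hsum] at hproj
  have hsplit : a * #S * #Sᶜ / Fintype.card V =
      a * #S - a * (⇑(hL.eigenvectorBasis i₀) ⬝ᵥ f) ^ 2 := by
    rw [div_eq_iff hn.ne', sub_mul, hproj, hSc]
    ring
  linarith

end SimpleGraph

theorem laplacian_isoperimetry_stability {V : Type*} [Fintype V] [DecidableEq V]
    (G : SimpleGraph V) [DecidableRel G.Adj]
    (hcard : 2 ≤ Fintype.card V)
    (μ : Fin (Fintype.card V) → ℝ) (hmono : Monotone μ)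
    (e : Fin (Fintype.card V) ≃ V)
    (heig : ∀ i, μ i = (SimpleGraph.posSemidef_lapMatrix ℝ G).1.eigenvalues (e i))
    (hμ1 : μ ⟨0, by omega⟩ = 0)
    (M : Fin (Fintype.card V))
    (hMgt : μ ⟨1, by omega⟩ < μ M)
    (hMmin : ∀ i, μ ⟨1, by omega⟩ < μ i → M ≤ i)
    (S : Finset V) (γ : ℝ)
    (hedge : (((S ×ˢ Sᶜ).filter fun p => G.Adj p.1 p.2).card : ℝ) ≤
      μ ⟨1, by omega⟩ * S.card * Sᶜ.card / Fintype.card V + γ * S.card)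
    (U : Submodule ℝ (V → ℝ))
    (hU : U = Module.End.eigenspace (Matrix.toLin' (G.lapMatrix ℝ)) (μ ⟨0, by omega⟩) ⊔
      Module.End.eigenspace (Matrix.toLin' (G.lapMatrix ℝ)) (μ ⟨1, by omega⟩))
    (P : V → ℝ) (hPU : P ∈ U)
    (hPorth : ∀ u ∈ U, ∑ v : V, ((if v ∈ S then (1:ℝ) else 0) - P v) * u v = 0) :
    (1 / (Fintype.card V : ℝ)) * ∑ v : V, ((if v ∈ S then (1:ℝ) else 0) - P v) ^ 2 ≤
      γ / (μ M - μ ⟨1, by omega⟩) * (S.card / Fintype.card V) := by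
  set μ₂ := μ ⟨1, by omega⟩
  set i₀ : Fin (Fintype.card V) := ⟨0, by omega⟩
  set hL := (SimpleGraph.posSemidef_lapMatrix ℝ G).1
  have hev (i : V) : hL.eigenvalues i = μ (e.symm i) := by rw [heig, e.apply_symm_apply]
  have hμ₂ : 0 ≤ μ₂ := hμ1 ▸ hmono (Fin.mk_le_mk.mpr zero_le_one)
  have h₀ : hL.eigenvalues (e i₀) = 0 := by rw [hev, e.symm_apply_apply, hμ1]
  have hle (i : V) (hi : i ≠ e i₀) : μ₂ ≤ hL.eigenvalues i := by
    rw [hev]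
    refine hmono (Fin.mk_le_of_le_val (Nat.one_le_iff_ne_zero.mpr fun h => hi ?_))
    rw [← e.apply_symm_apply i, (Fin.ext h : e.symm i = i₀)]
  have hgap (i : V) (hi : μ₂ < hL.eigenvalues i) : μ M ≤ hL.eigenvalues i := by
    rw [hev] at hi ⊢
    exact hmono (hMmin _ hi)
  have hU₀ : U = Module.End.eigenspace (toLin' (G.lapMatrix ℝ)) 0 ⊔
      Module.End.eigenspace (toLin' (G.lapMatrix ℝ)) μ₂ := hμ1 ▸ hU
  have hcut := G.mul_card_mul_card_compl_div_add_le_card_cut hL h₀ hμ₂ hle hgap (hU₀ ▸ hPU)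
    fun u hu => hPorth u (hU₀ ▸ hu)
  set f : V → ℝ := fun v => if v ∈ S then 1 else 0
  have hstab : (μ M - μ₂) * ((f - P) ⬝ᵥ (f - P)) ≤ γ * #S := by linarith
  have hnorm : ∑ v, ((if v ∈ S then (1 : ℝ) else 0) - P v) ^ 2 = (f - P) ⬝ᵥ (f - P) := by
    simp [f, dotProduct, sq]
  have hq : 0 < μ M - μ₂ := sub_pos.mpr hMgt
  have hn : (0 : ℝ) < Fintype.card V := by positivity
  rw [hnorm, one_div_mul_eq_div, ← mul_div_assoc, div_le_div_iff_of_pos_right hn,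
    div_mul_eq_mul_div, le_div_iff₀ hq, mul_comm]
  exact hstab
end

section
/- Let (b_{ij})_{i,j∈[n]} be a real n×n matrix all of whose row sums and column sums are zero, and define h: S_n → ℝ by h = ∑_{i,j} b_{ij}·𝟙_{T_{ij}}, where T_{ij} = {σ ∈ S_n : σ(i) = j}. Then E[h²] = (1/(n-1)) · ∑_{i,j} b_{ij}², where the expectation is over the uniform measure on S_n. -/
open Finset Nat Equiv

lemma card_filter_comp (n : ℕ) (e : Equiv.Perm (Fin n)) (p : Equiv.Perm (Fin n) → Prop)
    [DecidablePred p] :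
    (univ.filter fun σ => p (e * σ)).card = (univ.filter p).card := by
  apply Finset.card_bij' (fun σ _ => e * σ) (fun σ _ => e⁻¹ * σ)
  · intro a ha; simp only [mem_filter, mem_univ, true_and] at ha ⊢; exact ha
  · intro a ha; simp only [mem_filter, mem_univ, true_and] at ha ⊢
    simpa [mul_inv_cancel_left] using ha
  · intro a _; simp
  · intro a _; simp

lemma perm_card_one (n : ℕ) (i j : Fin n) :
    (univ.filter fun σ : Equiv.Perm (Fin n) => σ i = j).card = (n - 1)! := by
  have hpos : 0 < n := i.pos
  have hsw : ∀ j1 j2 : Fin n,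
      (univ.filter fun σ : Equiv.Perm (Fin n) => σ i = j1).card =
      (univ.filter fun σ : Equiv.Perm (Fin n) => σ i = j2).card := by
    intro j1 j2
    have := card_filter_comp n (Equiv.swap j1 j2) (fun σ => σ i = j2)
    rw [← this]
    congr 1
    apply Finset.filter_congr
    intro σ _
    simp only [Equiv.Perm.mul_apply]
    constructor
    · rintro rfl; simp
    · intro h
      have : Equiv.swap j1 j2 (σ i) = Equiv.swap j1 j2 j1 := by
        rw [h, Equiv.swap_apply_left]
      exact (Equiv.swap j1 j2).injective this
  have hfib : (univ : Finset (Equiv.Perm (Fin n))).card =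
      ∑ j' : Fin n, (univ.filter fun σ : Equiv.Perm (Fin n) => σ i = j').card :=
    Finset.card_eq_sum_card_fiberwise (fun x _ => mem_univ _)
  have hcard : (univ : Finset (Equiv.Perm (Fin n))).card = n ! := by
    rw [Finset.card_univ, Fintype.card_perm, Fintype.card_fin]
  have : n ! = n * (univ.filter fun σ : Equiv.Perm (Fin n) => σ i = j).card := by
    rw [← hcard, hfib]
    rw [Finset.sum_congr rfl (fun j' _ => hsw j' j)]
    simp [Finset.card_univ, mul_comm]
  have h2 : n * (n - 1)! = n ! := Nat.mul_factorial_pred hpos.ne'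
  exact (Nat.eq_of_mul_eq_mul_left hpos (h2.trans this)).symm

lemma perm_card_two (n : ℕ) (i1 i2 j1 j2 : Fin n) (hi : i1 ≠ i2) (hj : j1 ≠ j2) :
    (univ.filter fun σ : Equiv.Perm (Fin n) => σ i1 = j1 ∧ σ i2 = j2).card = (n - 2)! := by
  have hn : 2 ≤ n := by
    have : Nontrivial (Fin n) := ⟨j1, j2, hj⟩
    have := Fintype.one_lt_card (α := Fin n)
    simpa [Nat.lt_iff_add_one_le] using this
  -- all fibers over j' ≠ j1 have equal cardinality
  have hsw : ∀ j' : Fin n, j' ≠ j1 →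
      (univ.filter fun σ : Equiv.Perm (Fin n) => σ i1 = j1 ∧ σ i2 = j').card =
      (univ.filter fun σ : Equiv.Perm (Fin n) => σ i1 = j1 ∧ σ i2 = j2).card := by
    intro j' hj'
    have := card_filter_comp n (Equiv.swap j' j2) (fun σ => σ i1 = j1 ∧ σ i2 = j2)
    rw [← this]
    congr 1
    apply Finset.filter_congr
    intro σ _
    simp only [Equiv.Perm.mul_apply]
    have h1 : Equiv.swap j' j2 j1 = j1 :=
      Equiv.swap_apply_of_ne_of_ne (Ne.symm hj') hj
    constructor
    · rintro ⟨ha, hb⟩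
      exact ⟨by rw [ha, h1], by rw [hb, Equiv.swap_apply_left]⟩
    · rintro ⟨ha, hb⟩
      exact ⟨(Equiv.swap j' j2).injective (by rw [h1]; exact ha),
        (Equiv.swap j' j2).injective (by rw [Equiv.swap_apply_left]; exact hb)⟩
  -- fiberwise decomposition of {σ i1 = j1}
  have hfib : ((univ.filter fun σ : Equiv.Perm (Fin n) => σ i1 = j1)).card =
      ∑ j' : Fin n,
        ((univ.filter fun σ : Equiv.Perm (Fin n) => σ i1 = j1).filter
          (fun σ => σ i2 = j')).card :=
    Finset.card_eq_sum_card_fiberwise (fun x _ => mem_univ _)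
  simp only [Finset.filter_filter] at hfib
  rw [perm_card_one] at hfib
  rw [← Finset.sum_erase_add _ _ (mem_univ j1)] at hfib
  have hz : ((univ.filter fun σ : Equiv.Perm (Fin n) => σ i1 = j1 ∧ σ i2 = j1)).card = 0 := by
    rw [Finset.card_eq_zero, Finset.filter_eq_empty_iff]
    rintro σ _ ⟨h1, h2⟩
    exact hi (σ.injective (h1.trans h2.symm))
  rw [hz, add_zero] at hfib
  rw [Finset.sum_congr rfl (fun j' hj' => hsw j' (Finset.ne_of_mem_erase hj'))] at hfib
  rw [Finset.sum_const, Finset.card_erase_of_mem (mem_univ j1), Finset.card_univ,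
    Fintype.card_fin, smul_eq_mul] at hfib
  have h2 : (n - 1) * (n - 2)! = (n - 1)! := by
    have := Nat.mul_factorial_pred (n := n - 1) (by omega)
    simpa [show n - 1 - 1 = n - 2 by omega] using this
  have hpos : 0 < n - 1 := by omega
  exact Nat.eq_of_mul_eq_mul_left hpos (by omega)

lemma sum_perm_pair (n : ℕ) (i1 i2 : Fin n) (f : Fin n → Fin n → ℝ) :
    ∑ σ : Equiv.Perm (Fin n), f (σ i1) (σ i2) =
    ∑ j1, ∑ j2,
      ((univ.filter fun σ : Equiv.Perm (Fin n) => σ i1 = j1 ∧ σ i2 = j2).card : ℝ) * f j1 j2 := by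
  rw [← Finset.sum_fiberwise univ (fun σ : Equiv.Perm (Fin n) => (σ i1, σ i2))
    (fun σ => f (σ i1) (σ i2))]
  rw [Fintype.sum_prod_type]
  refine Finset.sum_congr rfl fun j1 _ => Finset.sum_congr rfl fun j2 _ => ?_
  trans ∑ _σ ∈ (univ.filter fun σ : Equiv.Perm (Fin n) => σ i1 = j1 ∧ σ i2 = j2), f j1 j2
  · apply Finset.sum_congr
    · apply Finset.filter_congr; intro σ _; simp [Prod.ext_iff]
    · intro σ hσ; simp only [mem_filter] at hσ; rw [hσ.2.1, hσ.2.2]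
  · rw [Finset.sum_const, nsmul_eq_mul]

theorem second_moment_of_h (n : ℕ) (hn : 2 ≤ n) (b : Fin n → Fin n → ℝ)
    (hrow : ∀ i, ∑ j, b i j = 0) (hcol : ∀ j, ∑ i, b i j = 0) :
    (∑ σ : Equiv.Perm (Fin n), (∑ i, b i (σ i)) ^ 2) / (n ! : ℝ) =
      (∑ i, ∑ j, b i j ^ 2) / ((n : ℝ) - 1) := by
  have key : (∑ σ : Equiv.Perm (Fin n), (∑ i, b i (σ i)) ^ 2)
      = (((n-1)! : ℝ) + ((n-2)! : ℝ)) * (∑ i, ∑ j, b i j ^ 2) := by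
    have step1 : ∀ σ : Equiv.Perm (Fin n),
        (∑ i, b i (σ i))^2 = ∑ i1, ∑ i2, b i1 (σ i1) * b i2 (σ i2) := by
      intro σ; rw [sq, Finset.sum_mul_sum]
    rw [Finset.sum_congr rfl fun σ _ => step1 σ]
    rw [Finset.sum_comm]
    rw [Finset.sum_congr rfl fun i1 _ => Finset.sum_comm]
    rw [Finset.sum_congr rfl fun i1 _ => Finset.sum_congr rfl fun i2 _ =>
      sum_perm_pair n i1 i2 (fun x y => b i1 x * b i2 y)]
    have hC : ∀ (i1 i2 j1 j2 : Fin n),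
        ((univ.filter fun σ : Equiv.Perm (Fin n) => σ i1 = j1 ∧ σ i2 = j2).card : ℝ)
            * (b i1 j1 * b i2 j2)
        = ((n-2)! : ℝ) * (b i1 j1 * b i2 j2)
          - ((n-2)! : ℝ) * (if i1 = i2 then b i1 j1 * b i2 j2 else 0)
          - ((n-2)! : ℝ) * (if j1 = j2 then b i1 j1 * b i2 j2 else 0)
          + (((n-1)! : ℝ) + ((n-2)! : ℝ))
            * (if i1 = i2 then (if j1 = j2 then b i1 j1 * b i2 j2 else 0) else 0) := by
      intro i1 i2 j1 j2
      rcases eq_or_ne i1 i2 with rfl | hi <;> rcases eq_or_ne j1 j2 with rfl | hj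
      · rw [show (univ.filter fun σ : Equiv.Perm (Fin n) => σ i1 = j1 ∧ σ i1 = j1)
            = (univ.filter fun σ : Equiv.Perm (Fin n) => σ i1 = j1) from by simp,
          perm_card_one]
        simp only [eq_self_iff_true, if_true]; ring
      · rw [show (univ.filter fun σ : Equiv.Perm (Fin n) => σ i1 = j1 ∧ σ i1 = j2) = ∅ from by
            rw [Finset.filter_eq_empty_iff]; rintro σ _ ⟨h1, h2⟩; exact hj (h1.symm.trans h2)]
        simp only [Finset.card_empty, eq_self_iff_true, if_true, if_neg hj]
        push_cast; ring
      · rw [show (univ.filter fun σ : Equiv.Perm (Fin n) => σ i1 = j1 ∧ σ i2 = j1) = ∅ from by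
            rw [Finset.filter_eq_empty_iff]; rintro σ _ ⟨h1, h2⟩
            exact hi (σ.injective (h1.trans h2.symm))]
        simp only [Finset.card_empty, if_neg hi, eq_self_iff_true, if_true]
        push_cast; ring
      · rw [perm_card_two n i1 i2 j1 j2 hi hj]
        simp only [if_neg hi, if_neg hj]; ring
    rw [Finset.sum_congr rfl fun i1 _ => Finset.sum_congr rfl fun i2 _ =>
      Finset.sum_congr rfl fun j1 _ => Finset.sum_congr rfl fun j2 _ => hC i1 i2 j1 j2]
    simp only [Finset.sum_add_distrib, Finset.sum_sub_distrib]
    have h1 : ∑ i1 : Fin n, ∑ i2 : Fin n, ∑ j1 : Fin n, ∑ j2 : Fin n,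
        ((n-2)! : ℝ) * (b i1 j1 * b i2 j2) = 0 := by
      refine Finset.sum_eq_zero fun i1 _ => Finset.sum_eq_zero fun i2 _ =>
        Finset.sum_eq_zero fun j1 _ => ?_
      simp only [← Finset.mul_sum, hrow i2, mul_zero]
    have h2 : ∑ i1 : Fin n, ∑ i2 : Fin n, ∑ j1 : Fin n, ∑ j2 : Fin n,
        ((n-2)! : ℝ) * (if i1 = i2 then b i1 j1 * b i2 j2 else 0) = 0 := by
      refine Finset.sum_eq_zero fun i1 _ => Finset.sum_eq_zero fun i2 _ => ?_
      rcases eq_or_ne i1 i2 with rfl | h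
      · simp only [eq_self_iff_true, if_true]
        refine Finset.sum_eq_zero fun j1 _ => ?_
        simp only [← Finset.mul_sum, hrow i1, mul_zero]
      · simp [h]
    have h3 : ∑ i1 : Fin n, ∑ i2 : Fin n, ∑ j1 : Fin n, ∑ j2 : Fin n,
        ((n-2)! : ℝ) * (if j1 = j2 then b i1 j1 * b i2 j2 else 0) = 0 := by
      refine Finset.sum_eq_zero fun i1 _ => ?_
      have e : ∀ i2 : Fin n, ∑ j1 : Fin n, ∑ j2 : Fin n,
          ((n-2)! : ℝ) * (if j1 = j2 then b i1 j1 * b i2 j2 else 0)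
          = ∑ j1, ((n-2)! : ℝ) * (b i1 j1 * b i2 j1) := by
        intro i2
        refine Finset.sum_congr rfl fun j1 _ => ?_
        simp only [mul_ite, mul_zero]
        simpa using Finset.sum_ite_eq univ j1 (fun j2 => ((n-2)! : ℝ) * (b i1 j1 * b i2 j2))
      rw [Finset.sum_congr rfl fun i2 _ => e i2]
      rw [Finset.sum_comm]
      refine Finset.sum_eq_zero fun j1 _ => ?_
      simp only [← Finset.mul_sum, hcol j1, mul_zero]
    have h4 : ∑ i1 : Fin n, ∑ i2 : Fin n, ∑ j1 : Fin n, ∑ j2 : Fin n,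
        (((n-1)! : ℝ) + ((n-2)! : ℝ))
          * (if i1 = i2 then (if j1 = j2 then b i1 j1 * b i2 j2 else 0) else 0)
        = (((n-1)! : ℝ) + ((n-2)! : ℝ)) * (∑ i, ∑ j, b i j ^ 2) := by
      rw [Finset.mul_sum]
      refine Finset.sum_congr rfl fun i1 _ => ?_
      have e : ∀ i2 : Fin n, ∑ j1 : Fin n, ∑ j2 : Fin n,
          (((n-1)! : ℝ) + ((n-2)! : ℝ))
            * (if i1 = i2 then (if j1 = j2 then b i1 j1 * b i2 j2 else 0) else 0)
          = if i1 = i2 then ∑ j1, (((n-1)! : ℝ) + ((n-2)! : ℝ)) * (b i1 j1 * b i2 j1)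
            else 0 := by
        intro i2
        rcases eq_or_ne i1 i2 with rfl | h
        · simp only [eq_self_iff_true, if_true]
          refine Finset.sum_congr rfl fun j1 _ => ?_
          simp only [mul_ite, mul_zero]
          simpa using Finset.sum_ite_eq univ j1
            (fun j2 => (((n-1)! : ℝ) + ((n-2)! : ℝ)) * (b i1 j1 * b i1 j2))
        · simp [h]
      rw [Finset.sum_congr rfl fun i2 _ => e i2]
      rw [Finset.sum_ite_eq univ i1
        (fun i2 => ∑ j1, (((n-1)! : ℝ) + ((n-2)! : ℝ)) * (b i1 j1 * b i2 j1))]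
      simp only [mem_univ, if_true, Finset.mul_sum]
      refine Finset.sum_congr rfl fun j _ => ?_
      ring
    rw [h1, h2, h3, h4]
    ring
  rw [key]
  obtain ⟨m, rfl⟩ := le_iff_exists_add.mp hn
  have e1 : 2 + m - 1 = m + 1 := by omega
  have e2 : 2 + m - 2 = m := by omega
  rw [e1, e2]
  have hfac : ((2 + m)! : ℝ) = ((m : ℝ) + 2) * ((m : ℝ) + 1) * (m ! : ℝ) := by
    rw [show 2 + m = m + 2 from by omega]
    push_cast [Nat.factorial_succ]
    ring
  have hfac1 : ((m + 1)! : ℝ) = ((m : ℝ) + 1) * (m ! : ℝ) := by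
    push_cast [Nat.factorial_succ]; ring
  rw [hfac, hfac1]
  have hm : (m ! : ℝ) ≠ 0 := by positivity
  have hm1 : (m : ℝ) + 1 ≠ 0 := by positivity
  have hm2 : (m : ℝ) + 2 ≠ 0 := by positivity
  have hcast : ((2 + m : ℕ) : ℝ) - 1 = (m : ℝ) + 1 := by push_cast; ring
  rw [hcast]
  field_simp
  ring
end

section
/- Let (b_{ij})_{i,j∈[n]} be a real n×n matrix all of whose row sums and column sums are zero, and let h = ∑_{i,j} b_{ij}·𝟙_{T_{ij}} where T_{ij} = {σ ∈ S_n : σ(i) = j}. Then E[h³] = (n/((n-1)(n-2))) · ∑_{i,j} b_{ij}³, where the expectation is over the uniform measure on S_n. -/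
open Finset Nat

section ThirdMomentAux
open Equiv

lemma card_perm_eq_on {n : ℕ} (s : Finset (Fin n)) (f : Fin n → Fin n)
    (hf : Set.InjOn f s) :
    (univ.filter (fun σ : Equiv.Perm (Fin n) => ∀ a ∈ s, σ a = f a)).card
      = (n - s.card)! := by
  induction s using Finset.induction_on with
  | empty =>
      simp [Finset.filter_true_of_mem, Finset.card_univ, Fintype.card_perm]
  | @insert a s ha ih =>
      have hfs : Set.InjOn f s := hf.mono (by intro x hx; simp only [Finset.coe_insert, Set.mem_insert_iff]; exact Or.inr hx)
      -- A := permutations agreeing with f on s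
      set A := univ.filter (fun σ : Equiv.Perm (Fin n) => ∀ a ∈ s, σ a = f a) with hA
      have hAcard : A.card = (n - s.card)! := ih hfs
      -- target set equals A.filter (σ a = f a)
      have htarget : (univ.filter (fun σ : Equiv.Perm (Fin n) => ∀ x ∈ insert a s, σ x = f x))
          = A.filter (fun σ => σ a = f a) := by
        rw [hA, Finset.filter_filter]
        apply Finset.filter_congr
        intro σ _
        simp [Finset.forall_mem_insert, and_comm]
      rw [htarget]
      -- fibers of σ ↦ σ a over targets not in f '' s all have equal card
      have key : ∀ j1 j2 : Fin n, j1 ∉ s.image f → j2 ∉ s.image f →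
          (A.filter (fun σ => σ a = j1)).card = (A.filter (fun σ => σ a = j2)).card := by
        intro j1 j2 h1 h2
        apply Finset.card_bij' (fun σ _ => Equiv.swap j1 j2 * σ) (fun σ _ => Equiv.swap j1 j2 * σ)
        · intro σ hσ
          simp only [A, Finset.mem_filter, Finset.mem_univ, true_and] at hσ ⊢
          obtain ⟨hσs, hσa⟩ := hσ
          constructor
          · intro x hx
            have : f x ≠ j1 := fun h => h1 (Finset.mem_image.2 ⟨x, hx, h⟩)
            have h2' : f x ≠ j2 := fun h => h2 (Finset.mem_image.2 ⟨x, hx, h⟩)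
            simp [Equiv.Perm.mul_apply, hσs x hx, Equiv.swap_apply_of_ne_of_ne this h2']
          · simp [Equiv.Perm.mul_apply, hσa]
        · intro σ hσ
          simp only [A, Finset.mem_filter, Finset.mem_univ, true_and] at hσ ⊢
          obtain ⟨hσs, hσa⟩ := hσ
          constructor
          · intro x hx
            have : f x ≠ j1 := fun h => h1 (Finset.mem_image.2 ⟨x, hx, h⟩)
            have h2' : f x ≠ j2 := fun h => h2 (Finset.mem_image.2 ⟨x, hx, h⟩)
            simp [Equiv.Perm.mul_apply, hσs x hx, Equiv.swap_apply_of_ne_of_ne this h2']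
          · simp [Equiv.Perm.mul_apply, hσa, Equiv.swap_apply_right]
        · intro σ _; simp [← mul_assoc]
        · intro σ _; simp [← mul_assoc]
      -- fibers over targets in f '' s are empty
      have hempty : ∀ j ∈ s.image f, (A.filter (fun σ => σ a = j)).card = 0 := by
        intro j hj
        rw [Finset.card_eq_zero, Finset.filter_eq_empty_iff]
        intro σ hσ
        simp only [A, Finset.mem_filter, Finset.mem_univ, true_and] at hσ
        obtain ⟨x, hx, hfx⟩ := Finset.mem_image.1 hj
        intro h
        have : σ a = σ x := by rw [h, ← hfx, hσ x hx]
        have : a = x := σ.injective this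
        exact ha (this ▸ hx)
      -- f a ∉ f '' s
      have hfa : f a ∉ s.image f := by
        intro h
        obtain ⟨x, hx, hfx⟩ := Finset.mem_image.1 h
        have : x = a := hf (by simp [hx]) (by simp) hfx
        exact ha (this ▸ hx)
      -- card A = ∑ over fibers
      have hsum : A.card = ∑ j : Fin n, (A.filter (fun σ => σ a = j)).card :=
        Finset.card_eq_sum_card_fiberwise (fun σ _ => Finset.mem_univ (σ a))
      -- split sum over image vs not
      have hscard : s.card < n := by
        have := Finset.card_le_card (Finset.subset_univ (insert a s))
        simpa [Finset.card_insert_of_notMem ha, Finset.card_univ] using this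
      have himg : (s.image f).card = s.card := Finset.card_image_of_injOn hfs
      have hsplit : ∑ j : Fin n, (A.filter (fun σ => σ a = j)).card
          = (n - s.card) * (A.filter (fun σ => σ a = f a)).card := by
        rw [← Finset.sum_filter_add_sum_filter_not univ (fun j => j ∈ s.image f)]
        have h1 : ∑ j ∈ univ.filter (fun j => j ∈ s.image f), (A.filter (fun σ => σ a = j)).card = 0 := by
          apply Finset.sum_eq_zero
          intro j hj
          exact hempty j (Finset.mem_filter.1 hj).2
        have h2 : ∑ j ∈ univ.filter (fun j => j ∉ s.image f), (A.filter (fun σ => σ a = j)).card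
            = (n - s.card) * (A.filter (fun σ => σ a = f a)).card := by
          rw [Finset.sum_congr rfl (fun j hj => key j (f a) (Finset.mem_filter.1 hj).2 hfa)]
          rw [Finset.sum_const, smul_eq_mul]
          congr 1
          rw [Finset.filter_not, Finset.filter_mem_eq_inter, Finset.univ_inter,
            Finset.card_sdiff_of_subset (Finset.subset_univ _), Finset.card_univ, himg, Fintype.card_fin]
        rw [h1, h2, zero_add]
      -- conclude
      have heq : (n - s.card)! = (n - s.card) * (A.filter (fun σ => σ a = f a)).card := by
        rw [← hAcard, hsum, hsplit]
      have hm : n - s.card = (n - s.card - 1) + 1 := by omega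
      rw [hm, Nat.factorial_succ] at heq
      have hX : (A.filter (fun σ => σ a = f a)).card = (n - s.card - 1)! :=
        (Nat.eq_of_mul_eq_mul_left (Nat.succ_pos _) heq).symm
      rw [hX, Finset.card_insert_of_notMem ha]
      congr 1

variable {n : ℕ}

lemma card1' (i j : Fin n) :
    (univ.filter (fun σ : Equiv.Perm (Fin n) => σ i = j)).card = (n - 1)! := by
  have h := card_perm_eq_on {i} (fun _ => j) (by intro x hx y hy _; simp at hx hy; rw [hx, hy])
  simp only [Finset.card_singleton] at h
  rw [← h]
  congr 1
  ext σ
  simp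

lemma card2' {i1 i2 j1 j2 : Fin n} (hi : i1 ≠ i2) (hj : j1 ≠ j2) :
    (univ.filter (fun σ : Equiv.Perm (Fin n) => σ i1 = j1 ∧ σ i2 = j2)).card = (n - 2)! := by
  have h := card_perm_eq_on {i1, i2} (fun x => if x = i1 then j1 else j2) ?_
  · rw [Finset.card_insert_of_notMem (by simp [hi]), Finset.card_singleton] at h
    rw [← h]
    congr 1
    ext σ
    simp [Finset.forall_mem_insert, hi, (Ne.symm hi)]
  · intro x hx y hy hxy
    simp only [Finset.coe_insert, Set.mem_insert_iff, Finset.coe_singleton,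
      Set.mem_singleton_iff] at hx hy
    rcases hx with rfl | rfl <;> rcases hy with rfl | rfl <;>
      simp_all [hi, Ne.symm hi]

lemma card3' {i1 i2 i3 j1 j2 j3 : Fin n} (h12 : i1 ≠ i2) (h13 : i1 ≠ i3) (h23 : i2 ≠ i3)
    (k12 : j1 ≠ j2) (k13 : j1 ≠ j3) (k23 : j2 ≠ j3) :
    (univ.filter (fun σ : Equiv.Perm (Fin n) => σ i1 = j1 ∧ σ i2 = j2 ∧ σ i3 = j3)).card
      = (n - 3)! := by
  have h := card_perm_eq_on {i1, i2, i3} (fun x => if x = i1 then j1 else if x = i2 then j2 else j3) ?_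
  · rw [show ({i1, i2, i3} : Finset (Fin n)).card = 3 by
      rw [Finset.card_insert_of_notMem (by simp [h12, h13]),
        Finset.card_insert_of_notMem (by simp [h23]), Finset.card_singleton]] at h
    rw [← h]
    congr 1
    ext σ
    simp [Finset.forall_mem_insert, h12, Ne.symm h12, h13, Ne.symm h13, h23, Ne.symm h23]
  · intro x hx y hy hxy
    simp only [Finset.coe_insert, Set.mem_insert_iff, Finset.coe_singleton,
      Set.mem_singleton_iff] at hx hy
    rcases hx with rfl | rfl | rfl <;> rcases hy with rfl | rfl | rfl <;>
      simp_all [h12, Ne.symm h12, h13, Ne.symm h13, h23, Ne.symm h23]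



lemma sum_perm_one' (i : Fin n) (g : Fin n → ℝ) :
    ∑ σ : Equiv.Perm (Fin n), g (σ i) = ((n - 1)! : ℝ) * ∑ j, g j := by
  rw [← Finset.sum_fiberwise_of_maps_to (g := fun σ : Equiv.Perm (Fin n) => σ i)
    (t := univ) (fun σ _ => Finset.mem_univ _) (fun σ => g (σ i))]
  rw [Finset.mul_sum]
  refine Finset.sum_congr rfl fun j _ => ?_
  rw [Finset.sum_congr rfl (fun σ hσ => by
    rw [(Finset.mem_filter.1 hσ).2]), Finset.sum_const, card1', nsmul_eq_mul]

lemma sum_perm_two' {i1 i2 : Fin n} (h : i1 ≠ i2) (g : Fin n → Fin n → ℝ) :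
    ∑ σ : Equiv.Perm (Fin n), g (σ i1) (σ i2)
      = ((n - 2)! : ℝ) * ∑ j1, ∑ j2 ∈ univ.erase j1, g j1 j2 := by
  have fib : ∀ j1 j2 : Fin n,
      ∑ σ ∈ univ.filter (fun σ : Equiv.Perm (Fin n) => (σ i1, σ i2) = (j1, j2)),
        g (σ i1) (σ i2) = if j1 = j2 then 0 else ((n - 2)! : ℝ) * g j1 j2 := by
    intro j1 j2
    by_cases hj : j1 = j2
    · rw [if_pos hj]
      apply Finset.sum_eq_zero
      intro σ hσ
      simp only [Finset.mem_filter, Prod.mk.injEq] at hσ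
      exact absurd (σ.injective (hσ.2.1.trans (hj.trans hσ.2.2.symm))) h
    · rw [if_neg hj]
      rw [Finset.sum_congr rfl (fun σ hσ => by
        have := (Finset.mem_filter.1 hσ).2
        simp only [Prod.mk.injEq] at this
        rw [this.1, this.2]), Finset.sum_const, nsmul_eq_mul]
      congr 1
      rw [show (univ.filter (fun σ : Equiv.Perm (Fin n) => (σ i1, σ i2) = (j1, j2)))
          = univ.filter (fun σ : Equiv.Perm (Fin n) => σ i1 = j1 ∧ σ i2 = j2) by
        apply Finset.filter_congr; intro σ _; simp [Prod.ext_iff]]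
      rw [card2' h hj]
  rw [← Finset.sum_fiberwise_of_maps_to (g := fun σ : Equiv.Perm (Fin n) => (σ i1, σ i2))
    (t := univ) (fun σ _ => Finset.mem_univ _) (fun σ => g (σ i1) (σ i2))]
  rw [Fintype.sum_prod_type, Finset.mul_sum]
  refine Finset.sum_congr rfl fun j1 _ => ?_
  rw [Finset.sum_congr rfl (fun j2 _ => fib j1 j2),
    ← Finset.add_sum_erase _ _ (Finset.mem_univ j1), if_pos rfl, zero_add, Finset.mul_sum]
  refine Finset.sum_congr rfl fun j2 hj2 => ?_
  rw [if_neg (Ne.symm (Finset.ne_of_mem_erase hj2))]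

lemma sum_perm_three' {i1 i2 i3 : Fin n} (h12 : i1 ≠ i2) (h13 : i1 ≠ i3) (h23 : i2 ≠ i3)
    (g : Fin n → Fin n → Fin n → ℝ) :
    ∑ σ : Equiv.Perm (Fin n), g (σ i1) (σ i2) (σ i3)
      = ((n - 3)! : ℝ) * ∑ j1, ∑ j2 ∈ univ.erase j1, ∑ j3 ∈ (univ.erase j1).erase j2,
          g j1 j2 j3 := by
  have fib : ∀ j1 j2 j3 : Fin n,
      ∑ σ ∈ univ.filter (fun σ : Equiv.Perm (Fin n) => (σ i1, σ i2, σ i3) = (j1, j2, j3)),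
        g (σ i1) (σ i2) (σ i3)
      = if j1 = j2 ∨ j1 = j3 ∨ j2 = j3 then 0 else ((n - 3)! : ℝ) * g j1 j2 j3 := by
    intro j1 j2 j3
    by_cases hj : j1 = j2 ∨ j1 = j3 ∨ j2 = j3
    · rw [if_pos hj]
      apply Finset.sum_eq_zero
      intro σ hσ
      simp only [Finset.mem_filter, Prod.mk.injEq] at hσ
      obtain ⟨-, e1, e2, e3⟩ := hσ
      rcases hj with hj | hj | hj
      · exact absurd (σ.injective (e1.trans (hj.trans e2.symm))) h12
      · exact absurd (σ.injective (e1.trans (hj.trans e3.symm))) h13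
      · exact absurd (σ.injective (e2.trans (hj.trans e3.symm))) h23
    · push_neg at hj
      obtain ⟨k12, k13, k23⟩ := hj
      rw [if_neg (by simp [k12, k13, k23])]
      rw [Finset.sum_congr rfl (fun σ hσ => by
        have := (Finset.mem_filter.1 hσ).2
        simp only [Prod.mk.injEq] at this
        rw [this.1, this.2.1, this.2.2]), Finset.sum_const, nsmul_eq_mul]
      congr 1
      rw [show (univ.filter (fun σ : Equiv.Perm (Fin n) => (σ i1, σ i2, σ i3) = (j1, j2, j3)))
          = univ.filter (fun σ : Equiv.Perm (Fin n) => σ i1 = j1 ∧ σ i2 = j2 ∧ σ i3 = j3) by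
        apply Finset.filter_congr; intro σ _; simp [Prod.ext_iff]]
      rw [card3' h12 h13 h23 k12 k13 k23]
  rw [← Finset.sum_fiberwise_of_maps_to (g := fun σ : Equiv.Perm (Fin n) => (σ i1, σ i2, σ i3))
    (t := univ) (fun σ _ => Finset.mem_univ _) (fun σ => g (σ i1) (σ i2) (σ i3))]
  rw [Fintype.sum_prod_type, Finset.mul_sum]
  refine Finset.sum_congr rfl fun j1 _ => ?_
  rw [Fintype.sum_prod_type]
  rw [Finset.sum_congr rfl (fun j2 _ => Finset.sum_congr rfl (fun j3 _ => fib j1 j2 j3))]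
  rw [← Finset.add_sum_erase _ _ (Finset.mem_univ j1)]
  have hz : ∑ j3 : Fin n, (if j1 = j1 ∨ j1 = j3 ∨ j1 = j3 then 0 else ((n - 3)! : ℝ) * g j1 j1 j3) = 0 := by
    apply Finset.sum_eq_zero; intro j3 _; rw [if_pos (Or.inl rfl)]
  rw [hz, zero_add, Finset.mul_sum]
  refine Finset.sum_congr rfl fun j2 hj2 => ?_
  have hj21 : j2 ≠ j1 := Finset.ne_of_mem_erase hj2
  rw [← Finset.add_sum_erase _ _ (Finset.mem_univ j1),
    if_pos (Or.inr (Or.inl rfl)), zero_add,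
    ← Finset.add_sum_erase _ _ hj2,
    if_pos (Or.inr (Or.inr rfl)), zero_add, Finset.mul_sum]
  refine Finset.sum_congr rfl fun j3 hj3 => ?_
  have h3 := Finset.mem_erase.1 hj3
  have h31 : j3 ≠ j1 := Finset.ne_of_mem_erase h3.2
  rw [if_neg (by simp [Ne.symm hj21, Ne.symm h31, Ne.symm h3.1])]


lemma alg2' (c d : Fin n → ℝ) (h : (∑ j, c j) * (∑ j, d j) = 0) :
    ∑ j1, ∑ j2 ∈ univ.erase j1, c j1 * d j2 = -∑ j, c j * d j := by
  rw [Finset.sum_congr rfl (fun j1 _ => by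
    rw [← Finset.mul_sum, Finset.sum_erase_eq_sub (Finset.mem_univ j1),
      mul_sub] : ∀ j1 ∈ univ, _ = c j1 * (∑ j, d j) - c j1 * d j1)]
  rw [Finset.sum_sub_distrib, ← Finset.sum_mul, h, zero_sub]

lemma alg3' (c d e : Fin n → ℝ) (hc : ∑ j, c j = 0) (hd : ∑ j, d j = 0)
    (he : ∑ j, e j = 0) :
    ∑ j1, ∑ j2 ∈ univ.erase j1, ∑ j3 ∈ (univ.erase j1).erase j2, c j1 * d j2 * e j3
      = 2 * ∑ j, c j * d j * e j := by
  have step1 : ∀ j1, ∑ j2 ∈ univ.erase j1, ∑ j3 ∈ (univ.erase j1).erase j2,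
      c j1 * d j2 * e j3
      = 2 * (c j1 * d j1 * e j1) - c j1 * ∑ j, d j * e j := by
    intro j1
    have inner : ∀ j2 ∈ univ.erase j1, ∑ j3 ∈ (univ.erase j1).erase j2,
        c j1 * d j2 * e j3 = (-(c j1 * e j1) * d j2) - c j1 * (d j2 * e j2) := by
      intro j2 hj2
      rw [← Finset.mul_sum, Finset.sum_erase_eq_sub hj2,
        Finset.sum_erase_eq_sub (Finset.mem_univ j1), he]
      ring
    rw [Finset.sum_congr rfl inner, Finset.sum_sub_distrib, ← Finset.mul_sum,
      ← Finset.mul_sum, Finset.sum_erase_eq_sub (Finset.mem_univ j1), hd,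
      Finset.sum_erase_eq_sub (Finset.mem_univ j1)]
    ring
  rw [Finset.sum_congr rfl (fun j1 _ => step1 j1), Finset.sum_sub_distrib,
    ← Finset.sum_mul, ← Finset.mul_sum]
  rw [hc]
  ring

variable {n : ℕ}

lemma swap2 {s1 : Finset (Fin n)} {s2 : Fin n → Finset (Fin n)}
    (F : Fin n → Fin n → Fin n → ℝ) :
    ∑ i1 ∈ s1, ∑ i2 ∈ s2 i1, ∑ j, F i1 i2 j = ∑ j, ∑ i1 ∈ s1, ∑ i2 ∈ s2 i1, F i1 i2 j := by
  trans ∑ i1 ∈ s1, ∑ j, ∑ i2 ∈ s2 i1, F i1 i2 j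
  · exact Finset.sum_congr rfl fun i1 _ => Finset.sum_comm
  · exact Finset.sum_comm

lemma swap3 {s1 : Finset (Fin n)} {s2 : Fin n → Finset (Fin n)}
    {s3 : Fin n → Fin n → Finset (Fin n)} (F : Fin n → Fin n → Fin n → Fin n → ℝ) :
    ∑ i1 ∈ s1, ∑ i2 ∈ s2 i1, ∑ i3 ∈ s3 i1 i2, ∑ j, F i1 i2 i3 j
      = ∑ j, ∑ i1 ∈ s1, ∑ i2 ∈ s2 i1, ∑ i3 ∈ s3 i1 i2, F i1 i2 i3 j := by
  trans ∑ i1 ∈ s1, ∑ j, ∑ i2 ∈ s2 i1, ∑ i3 ∈ s3 i1 i2, F i1 i2 i3 j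
  · refine Finset.sum_congr rfl fun i1 _ => ?_
    trans ∑ i2 ∈ s2 i1, ∑ j, ∑ i3 ∈ s3 i1 i2, F i1 i2 i3 j
    · exact Finset.sum_congr rfl fun i2 _ => Finset.sum_comm
    · exact Finset.sum_comm
  · exact Finset.sum_comm

lemma split_triple (g : Fin n → Fin n → Fin n → ℝ) :
    ∑ i1, ∑ i2, ∑ i3, g i1 i2 i3 =
      (∑ i, g i i i)
      + (∑ i1, ∑ i3 ∈ univ.erase i1, g i1 i1 i3)
      + (∑ i1, ∑ i2 ∈ univ.erase i1, g i1 i2 i1)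
      + (∑ i1, ∑ i2 ∈ univ.erase i1, g i1 i2 i2)
      + ∑ i1, ∑ i2 ∈ univ.erase i1, ∑ i3 ∈ (univ.erase i1).erase i2, g i1 i2 i3 := by
  have h1 : ∀ i1 : Fin n, ∑ i2, ∑ i3, g i1 i2 i3
      = (g i1 i1 i1 + ∑ i3 ∈ univ.erase i1, g i1 i1 i3)
        + ∑ i2 ∈ univ.erase i1,
            (g i1 i2 i1 + (g i1 i2 i2 + ∑ i3 ∈ (univ.erase i1).erase i2, g i1 i2 i3)) := by
    intro i1
    calc ∑ i2, ∑ i3, g i1 i2 i3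
        = (∑ i3, g i1 i1 i3) + ∑ i2 ∈ univ.erase i1, ∑ i3, g i1 i2 i3 :=
          (Finset.add_sum_erase _ (fun i2 => ∑ i3, g i1 i2 i3) (Finset.mem_univ i1)).symm
      _ = _ := by
          congr 1
          · exact (Finset.add_sum_erase _ (fun i3 => g i1 i1 i3) (Finset.mem_univ i1)).symm
          · refine Finset.sum_congr rfl fun i2 hi2 => ?_
            calc ∑ i3, g i1 i2 i3
                = g i1 i2 i1 + ∑ i3 ∈ univ.erase i1, g i1 i2 i3 :=
                  (Finset.add_sum_erase _ (fun i3 => g i1 i2 i3) (Finset.mem_univ i1)).symm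
              _ = _ := by
                  congr 1
                  exact (Finset.add_sum_erase _ (fun i3 => g i1 i2 i3) hi2).symm
  rw [Finset.sum_congr rfl fun i1 _ => h1 i1]
  simp only [Finset.sum_add_distrib]
  abel

lemma pieceA (b : Fin n → Fin n → ℝ) :
    ∑ i : Fin n, ∑ σ : Equiv.Perm (Fin n), b i (σ i) * b i (σ i) * b i (σ i)
      = ((n - 1)! : ℝ) * ∑ i, ∑ j, b i j ^ 3 := by
  rw [Finset.mul_sum]
  refine Finset.sum_congr rfl fun i _ => ?_
  rw [sum_perm_one' i (fun j => b i j * b i j * b i j)]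
  congr 1
  exact Finset.sum_congr rfl fun j _ => by ring

lemma pieceB_core (b : Fin n → Fin n → ℝ) (hcol : ∀ j, ∑ i, b i j = 0) :
    ∑ i1 : Fin n, ∑ i2 ∈ univ.erase i1, ∑ j, b i1 j * b i1 j * b i2 j
      = -∑ i, ∑ j, b i j ^ 3 := by
  rw [swap2 (fun i1 i2 j => b i1 j * b i1 j * b i2 j)]
  rw [Finset.sum_congr rfl (fun j _ =>
    alg2' (fun i => b i j * b i j) (fun i => b i j) (by rw [hcol j, mul_zero]))]
  rw [Finset.sum_neg_distrib]
  congr 1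
  rw [Finset.sum_comm]
  exact Finset.sum_congr rfl fun i _ => Finset.sum_congr rfl fun j _ => by ring

lemma pieceB3_core (b : Fin n → Fin n → ℝ) (hcol : ∀ j, ∑ i, b i j = 0) :
    ∑ i1 : Fin n, ∑ i2 ∈ univ.erase i1, ∑ j, b i1 j * (b i2 j * b i2 j)
      = -∑ i, ∑ j, b i j ^ 3 := by
  rw [swap2 (fun i1 i2 j => b i1 j * (b i2 j * b i2 j))]
  rw [Finset.sum_congr rfl (fun j _ =>
    alg2' (fun i => b i j) (fun i => b i j * b i j) (by rw [hcol j, zero_mul]))]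
  rw [Finset.sum_neg_distrib]
  congr 1
  rw [Finset.sum_comm]
  exact Finset.sum_congr rfl fun i _ => Finset.sum_congr rfl fun j _ => by ring

lemma pieceD_core (b : Fin n → Fin n → ℝ) (hcol : ∀ j, ∑ i, b i j = 0) :
    ∑ i1 : Fin n, ∑ i2 ∈ univ.erase i1, ∑ i3 ∈ (univ.erase i1).erase i2,
      ∑ j, b i1 j * b i2 j * b i3 j = 2 * ∑ i, ∑ j, b i j ^ 3 := by
  rw [swap3 (fun i1 i2 i3 j => b i1 j * b i2 j * b i3 j)]
  rw [Finset.sum_congr rfl (fun j _ =>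
    alg3' (fun i => b i j) (fun i => b i j) (fun i => b i j) (hcol j) (hcol j) (hcol j))]
  rw [← Finset.mul_sum]
  congr 1
  rw [Finset.sum_comm]
  exact Finset.sum_congr rfl fun i _ => Finset.sum_congr rfl fun j _ => by ring

lemma pieceB1 (b : Fin n → Fin n → ℝ) (hrow : ∀ i, ∑ j, b i j = 0)
    (hcol : ∀ j, ∑ i, b i j = 0) :
    ∑ i1 : Fin n, ∑ i2 ∈ univ.erase i1,
      ∑ σ : Equiv.Perm (Fin n), b i1 (σ i1) * b i1 (σ i1) * b i2 (σ i2)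
      = ((n - 2)! : ℝ) * ∑ i, ∑ j, b i j ^ 3 := by
  have inner : ∀ i1 : Fin n, ∀ i2 ∈ univ.erase i1,
      (∑ σ : Equiv.Perm (Fin n), b i1 (σ i1) * b i1 (σ i1) * b i2 (σ i2))
      = ((n - 2)! : ℝ) * -∑ j, b i1 j * b i1 j * b i2 j := by
    intro i1 i2 hi2
    rw [sum_perm_two' (Finset.ne_of_mem_erase hi2).symm
      (fun j1 j2 => b i1 j1 * b i1 j1 * b i2 j2)]
    congr 1
    exact alg2' (fun j => b i1 j * b i1 j) (fun j => b i2 j) (by rw [hrow i2, mul_zero])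
  rw [Finset.sum_congr rfl (fun i1 _ => Finset.sum_congr rfl (inner i1))]
  simp only [← Finset.mul_sum, Finset.sum_neg_distrib]
  rw [pieceB_core b hcol, neg_neg]

lemma pieceB2 (b : Fin n → Fin n → ℝ) (hrow : ∀ i, ∑ j, b i j = 0)
    (hcol : ∀ j, ∑ i, b i j = 0) :
    ∑ i1 : Fin n, ∑ i2 ∈ univ.erase i1,
      ∑ σ : Equiv.Perm (Fin n), b i1 (σ i1) * b i2 (σ i2) * b i1 (σ i1)
      = ((n - 2)! : ℝ) * ∑ i, ∑ j, b i j ^ 3 := by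
  have inner : ∀ i1 : Fin n, ∀ i2 ∈ univ.erase i1,
      (∑ σ : Equiv.Perm (Fin n), b i1 (σ i1) * b i2 (σ i2) * b i1 (σ i1))
      = ((n - 2)! : ℝ) * -∑ j, b i1 j * b i1 j * b i2 j := by
    intro i1 i2 hi2
    rw [sum_perm_two' (Finset.ne_of_mem_erase hi2).symm
      (fun j1 j2 => b i1 j1 * b i2 j2 * b i1 j1)]
    congr 1
    rw [Finset.sum_congr rfl (fun j1 _ => Finset.sum_congr rfl
      (fun j2 _ => show b i1 j1 * b i2 j2 * b i1 j1 = b i1 j1 * b i1 j1 * b i2 j2 by ring))]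
    exact alg2' (fun j => b i1 j * b i1 j) (fun j => b i2 j) (by rw [hrow i2, mul_zero])
  rw [Finset.sum_congr rfl (fun i1 _ => Finset.sum_congr rfl (inner i1))]
  simp only [← Finset.mul_sum, Finset.sum_neg_distrib]
  rw [pieceB_core b hcol, neg_neg]

lemma pieceB3 (b : Fin n → Fin n → ℝ) (hrow : ∀ i, ∑ j, b i j = 0)
    (hcol : ∀ j, ∑ i, b i j = 0) :
    ∑ i1 : Fin n, ∑ i2 ∈ univ.erase i1,
      ∑ σ : Equiv.Perm (Fin n), b i1 (σ i1) * b i2 (σ i2) * b i2 (σ i2)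
      = ((n - 2)! : ℝ) * ∑ i, ∑ j, b i j ^ 3 := by
  have inner : ∀ i1 : Fin n, ∀ i2 ∈ univ.erase i1,
      (∑ σ : Equiv.Perm (Fin n), b i1 (σ i1) * b i2 (σ i2) * b i2 (σ i2))
      = ((n - 2)! : ℝ) * -∑ j, b i1 j * (b i2 j * b i2 j) := by
    intro i1 i2 hi2
    rw [sum_perm_two' (Finset.ne_of_mem_erase hi2).symm
      (fun j1 j2 => b i1 j1 * b i2 j2 * b i2 j2)]
    congr 1
    rw [Finset.sum_congr rfl (fun j1 _ => Finset.sum_congr rfl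
      (fun j2 _ => show b i1 j1 * b i2 j2 * b i2 j2 = b i1 j1 * (b i2 j2 * b i2 j2) by ring))]
    exact alg2' (fun j => b i1 j) (fun j => b i2 j * b i2 j) (by rw [hrow i1, zero_mul])
  rw [Finset.sum_congr rfl (fun i1 _ => Finset.sum_congr rfl (inner i1))]
  simp only [← Finset.mul_sum, Finset.sum_neg_distrib]
  rw [pieceB3_core b hcol, neg_neg]

lemma pieceD (b : Fin n → Fin n → ℝ) (hrow : ∀ i, ∑ j, b i j = 0)
    (hcol : ∀ j, ∑ i, b i j = 0) :
    ∑ i1 : Fin n, ∑ i2 ∈ univ.erase i1, ∑ i3 ∈ (univ.erase i1).erase i2,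
      ∑ σ : Equiv.Perm (Fin n), b i1 (σ i1) * b i2 (σ i2) * b i3 (σ i3)
      = ((n - 3)! : ℝ) * (2 * (2 * ∑ i, ∑ j, b i j ^ 3)) := by
  have inner : ∀ i1 : Fin n, ∀ i2 ∈ univ.erase i1, ∀ i3 ∈ (univ.erase i1).erase i2,
      (∑ σ : Equiv.Perm (Fin n), b i1 (σ i1) * b i2 (σ i2) * b i3 (σ i3))
      = ((n - 3)! : ℝ) * (2 * ∑ j, b i1 j * b i2 j * b i3 j) := by
    intro i1 i2 hi2 i3 hi3
    have h12 : i1 ≠ i2 := (Finset.ne_of_mem_erase hi2).symm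
    have h23 : i2 ≠ i3 := (Finset.ne_of_mem_erase hi3).symm
    have h13 : i1 ≠ i3 := (Finset.ne_of_mem_erase (Finset.mem_of_mem_erase hi3)).symm
    rw [sum_perm_three' h12 h13 h23 (fun j1 j2 j3 => b i1 j1 * b i2 j2 * b i3 j3)]
    congr 1
    exact alg3' (fun j => b i1 j) (fun j => b i2 j) (fun j => b i3 j)
      (hrow i1) (hrow i2) (hrow i3)
  rw [Finset.sum_congr rfl (fun i1 _ => Finset.sum_congr rfl (fun i2 hi2 =>
    Finset.sum_congr rfl (inner i1 i2 hi2)))]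
  simp only [← Finset.mul_sum]
  rw [pieceD_core b hcol]

end ThirdMomentAux

theorem third_moment_of_h (n : ℕ) (hn : 3 ≤ n) (b : Fin n → Fin n → ℝ)
    (hrow : ∀ i, ∑ j, b i j = 0) (hcol : ∀ j, ∑ i, b i j = 0) :
    (∑ σ : Equiv.Perm (Fin n), (∑ i, b i (σ i)) ^ 3) / (n ! : ℝ) =
      ((n : ℝ) / (((n : ℝ) - 1) * ((n : ℝ) - 2))) * ∑ i, ∑ j, b i j ^ 3 := by
  obtain ⟨m, rfl⟩ : ∃ m, n = m + 3 := ⟨n - 3, by omega⟩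
  have cube : ∀ σ : Equiv.Perm (Fin (m + 3)), (∑ i, b i (σ i)) ^ 3
      = ∑ i1, ∑ i2, ∑ i3, b i1 (σ i1) * b i2 (σ i2) * b i3 (σ i3) := by
    intro σ
    rw [pow_succ, pow_two, Finset.sum_mul_sum, Finset.sum_mul]
    refine Finset.sum_congr rfl fun i1 _ => ?_
    rw [Finset.sum_mul]
    refine Finset.sum_congr rfl fun i2 _ => ?_
    rw [Finset.mul_sum]
  have hswap : (∑ σ : Equiv.Perm (Fin (m + 3)), (∑ i, b i (σ i)) ^ 3)
      = ∑ i1, ∑ i2, ∑ i3, ∑ σ : Equiv.Perm (Fin (m + 3)),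
          b i1 (σ i1) * b i2 (σ i2) * b i3 (σ i3) := by
    rw [Finset.sum_congr rfl (fun σ _ => cube σ), Finset.sum_comm]
    refine Finset.sum_congr rfl fun i1 _ => ?_
    rw [Finset.sum_comm]
    refine Finset.sum_congr rfl fun i2 _ => ?_
    exact Finset.sum_comm
  rw [hswap, split_triple (fun i1 i2 i3 => ∑ σ : Equiv.Perm (Fin (m + 3)),
    b i1 (σ i1) * b i2 (σ i2) * b i3 (σ i3))]
  rw [pieceA b, pieceB1 b hrow hcol, pieceB2 b hrow hcol, pieceB3 b hrow hcol,
    pieceD b hrow hcol]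
  rw [show m + 3 - 1 = m + 2 from rfl, show m + 3 - 2 = m + 1 from rfl,
    show m + 3 - 3 = m from rfl]
  have f1 : ((m + 1)! : ℝ) = ((m : ℝ) + 1) * (m ! : ℝ) := by
    rw [factorial_succ]; push_cast; ring
  have f2 : ((m + 2)! : ℝ) = ((m : ℝ) + 2) * (((m : ℝ) + 1) * (m ! : ℝ)) := by
    rw [show m + 2 = (m + 1) + 1 from rfl, factorial_succ, factorial_succ]; push_cast; ring
  have f3 : ((m + 3)! : ℝ) = ((m : ℝ) + 3) * (((m : ℝ) + 2) * (((m : ℝ) + 1) * (m ! : ℝ))) := by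
    rw [show m + 3 = ((m + 1) + 1) + 1 from rfl, factorial_succ, factorial_succ,
      factorial_succ]; push_cast; ring
  rw [f1, f2, f3]
  push_cast
  rw [show (m : ℝ) + 3 - 1 = (m : ℝ) + 2 from by ring,
    show (m : ℝ) + 3 - 2 = (m : ℝ) + 1 from by ring]
  have h0 : (m ! : ℝ) ≠ 0 := Nat.cast_ne_zero.2 (factorial_ne_zero m)
  have h1 : (m : ℝ) + 1 ≠ 0 := by positivity
  have h2 : (m : ℝ) + 2 ≠ 0 := by positivity
  have h3 : (m : ℝ) + 3 ≠ 0 := by positivity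
  field_simp
  ring
end

section
/- Let n ≥ 2, c ∈ [n], and let A = T_{1,1} ∪ ... ∪ T_{1,c} ⊆ S_n, and define b_{ij} = |A ∩ T_{ij}|/(n-1)! − c/n. Then ∑_{i,j} b_{ij}³ = c(1 − 1/(n-1)²) − c²·3(n-2)/(n-1)² + c³·2(n-2)/(n(n-1)²). -/
open Finset Nat

/-! Write `A = {σ | σ a ∈ S}` with `#S = c`. In row `a`, `#(A ∩ T_{aj})` is `(n-1)!` for the
`c` columns `j ∈ S` and `0` otherwise. For `i ≠ a`, the permutations with `σ a = k` and
`σ i = j` form a coset of the pointwise stabiliser of `{a, i}`, so there are `(n-2)!` of them,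
and `#(A ∩ T_{ij}) = #(S.erase j) * (n-2)!`. Every row of `b` therefore takes only two values,
with multiplicities `c` and `n - c`, and the sum of cubes is a rational function of `n` and `c`. -/

namespace Equiv.Perm

theorem exists_apply_eq_and_apply_eq {α : Type*} [DecidableEq α] {a b x y : α} (hab : a ≠ b)
    (hxy : x ≠ y) : ∃ τ : Perm α, τ a = x ∧ τ b = y := by
  refine ⟨swap (swap a x b) y * swap a x, ?_, by simp⟩
  have hbx : swap a x b ≠ x := by simpa [swap_apply_eq_iff] using hab.symm
  simp [swap_apply_of_ne_of_ne hbx.symm hxy]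

variable {α : Type*} [Fintype α] [DecidableEq α]

theorem card_filter_forall_mem_apply_eq_self (s : Finset α) :
    #{σ : Perm α | ∀ x ∈ s, σ x = x} = (Fintype.card α - #s)! := by
  have e := Perm.subtypeEquivSubtypePerm (· ∉ s)
  simp only [not_not] at e
  rw [← Fintype.card_subtype, ← Fintype.card_congr e, Fintype.card_perm,
    Fintype.card_subtype_compl, Fintype.card_coe]

theorem card_filter_forall_mem_apply_eq (s : Finset α) (τ : Perm α) :
    #{σ : Perm α | ∀ x ∈ s, σ x = τ x} = (Fintype.card α - #s)! := by
  rw [← card_filter_forall_mem_apply_eq_self s]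
  exact (card_equiv (Equiv.mulLeft τ) fun σ => by simp).symm

theorem card_filter_apply_eq (a x : α) :
    #{σ : Perm α | σ a = x} = (Fintype.card α - 1)! := by
  simpa using card_filter_forall_mem_apply_eq {a} (swap a x)

theorem card_filter_apply_eq_and_apply_eq {a b x y : α} (hab : a ≠ b) (hxy : x ≠ y) :
    #{σ : Perm α | σ a = x ∧ σ b = y} = (Fintype.card α - 2)! := by
  obtain ⟨τ, rfl, rfl⟩ := exists_apply_eq_and_apply_eq (α := α) hab hxy
  simpa [card_pair hab] using card_filter_forall_mem_apply_eq {a, b} τ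

variable (p : α → Prop) [DecidablePred p]

theorem card_filter_apply_and_apply_eq_self (a j : α) :
    #{σ : Perm α | p (σ a) ∧ σ a = j} = if p j then (Fintype.card α - 1)! else 0 := by
  split_ifs with hj
  · rw [← card_filter_apply_eq a j]
    congr 1; ext σ; simp only [mem_filter, mem_univ, true_and, and_iff_right_iff_imp]
    rintro rfl; exact hj
  · rw [Finset.card_eq_zero, filter_eq_empty_iff]
    rintro σ - ⟨hσ, rfl⟩; exact hj hσ

theorem card_filter_apply_and_apply_eq_of_ne {a i : α} (hia : i ≠ a) (j : α) :
    #{σ : Perm α | p (σ a) ∧ σ i = j} =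
      #(({k | p k} : Finset α).erase j) * (Fintype.card α - 2)! := by
  rw [card_eq_sum_card_fiberwise (f := fun σ : Perm α => σ a)
    (t := ({k | p k} : Finset α).erase j)]
  · rw [← smul_eq_mul, ← sum_const]
    refine sum_congr rfl fun k hk => ?_
    obtain ⟨hkj, hk⟩ := mem_erase.1 hk
    rw [← card_filter_apply_eq_and_apply_eq hia.symm hkj]
    congr 1; ext σ; simp only [mem_filter, mem_univ, true_and]
    constructor
    · rintro ⟨⟨-, h⟩, rfl⟩; exact ⟨rfl, h⟩
    · rintro ⟨rfl, h⟩; exact ⟨⟨by simpa using hk, h⟩, rfl⟩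
  · intro σ hσ
    simp only [mem_coe, mem_erase, mem_filter, mem_univ, true_and] at hσ ⊢
    exact ⟨fun h => hia (σ.injective (hσ.2.trans h.symm)), hσ.1⟩

theorem sum_comp_card_filter_apply_and_apply_eq_self (a : α) (f : ℝ → ℝ) :
    ∑ j, f (#{σ : Perm α | p (σ a) ∧ σ a = j} / (Fintype.card α - 1)!) =
      #{k | p k} * f 1 + #{k | ¬p k} * f 0 := by
  have hratio (j : α) : (#{σ : Perm α | p (σ a) ∧ σ a = j} : ℝ) / (Fintype.card α - 1)! =
      if p j then 1 else 0 := by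
    rw [card_filter_apply_and_apply_eq_self]
    split_ifs <;> simp [factorial_ne_zero]
  simp only [hratio, apply_ite f]
  rw [sum_ite, sum_const, sum_const, nsmul_eq_mul, nsmul_eq_mul]

theorem sum_comp_card_filter_apply_and_apply_eq_of_ne {a i : α} (hia : i ≠ a) (f : ℝ → ℝ) :
    ∑ j, f (#{σ : Perm α | p (σ a) ∧ σ i = j} / (Fintype.card α - 1)!) =
      #{k | p k} * f ((#{k | p k} - 1) / (Fintype.card α - 1)) +
        #{k | ¬p k} * f (#{k | p k} / (Fintype.card α - 1)) := by
  have hcard : 2 ≤ Fintype.card α := Fintype.one_lt_card_iff.2 ⟨i, a, hia⟩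
  have hratio (j : α) : (#{σ : Perm α | p (σ a) ∧ σ i = j} : ℝ) / (Fintype.card α - 1)! =
      #(({k | p k} : Finset α).erase j) / (Fintype.card α - 1) := by
    rw [card_filter_apply_and_apply_eq_of_ne p hia,
      show Fintype.card α - 1 = Fintype.card α - 2 + 1 by omega, factorial_succ, Nat.cast_mul,
      Nat.cast_mul, mul_div_mul_right _ _ (by positivity)]
    push_cast [Nat.cast_sub hcard]
    ring_nf
  simp only [hratio]
  rw [← sum_filter_add_sum_filter_not univ p]
  congr 1
  · rw [sum_congr rfl fun j hj => by rw [cast_card_erase_of_mem (by simpa using hj)], sum_const,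
      nsmul_eq_mul]
  · rw [sum_congr rfl fun j hj => by rw [erase_eq_of_notMem (by simpa using hj)], sum_const,
      nsmul_eq_mul]

end Equiv.Perm

theorem sum_cubes_for_disjoint_union_of_cosets (n c : ℕ) (hn : 2 ≤ n)
    (hcn : c ≤ n) :
    ∑ i : Fin n, ∑ j : Fin n,
      (((Finset.univ.filter fun σ : Equiv.Perm (Fin n) =>
          (σ ⟨0, by omega⟩ : Fin n).val < c ∧ σ i = j).card : ℝ) / ((n - 1)! : ℝ)
        - (c : ℝ) / (n : ℝ)) ^ 3 =
      (c : ℝ) * (1 - 1 / ((n : ℝ) - 1) ^ 2)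
        - (c : ℝ) ^ 2 * (3 * ((n : ℝ) - 2) / ((n : ℝ) - 1) ^ 2)
        + (c : ℝ) ^ 3 * (2 * ((n : ℝ) - 2) / ((n : ℝ) * ((n : ℝ) - 1) ^ 2)) := by
  set a : Fin n := ⟨0, by omega⟩
  set p : Fin n → Prop := fun k => k.val < c
  set f : ℝ → ℝ := fun x => (x - c / n) ^ 3
  have hp : #{k | p k} = c := by simp [p, Fin.card_filter_val_lt, hcn]
  have hnp : #{k | ¬p k} = n - c := by
    rw [filter_not, card_sdiff_of_subset (filter_subset _ _), hp, Finset.card_univ,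
      Fintype.card_fin]
  have row_a := Equiv.Perm.sum_comp_card_filter_apply_and_apply_eq_self p a f
  have row_ne (i) (hi : i ∈ ({a}ᶜ : Finset (Fin n))) :=
    Equiv.Perm.sum_comp_card_filter_apply_and_apply_eq_of_ne p (by simpa using hi) f
  simp only [Fintype.card_fin, hp, hnp] at row_a row_ne
  rw [Fintype.sum_eq_add_sum_compl a, row_a, sum_congr rfl row_ne, sum_const, card_compl,
    card_singleton, Fintype.card_fin, nsmul_eq_mul]
  have hn0 : (n : ℝ) ≠ 0 := by positivity
  have hn1 : (n : ℝ) - 1 ≠ 0 := by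
    rw [sub_ne_zero]; exact_mod_cast (by omega : n ≠ 1)
  push_cast [f, Nat.cast_sub hcn, Nat.cast_sub (by omega : 1 ≤ n)]
  field_simp
  ring
end

section
/- Let θ ∈ (0,1), H > L ≥ 0, and η ≥ 0 with √(η/(θ(1-θ))) ≤ H − L. Among all pairs (r,s) with r,s ≥ 0 satisfying θr + (1-θ)s = θH + (1-θ)L and θ(r-H)² + (1-θ)(s-L)² ≤ η, the minimum of θr³ + (1-θ)s³ equals θH³ + (1-θ)L³ − 3(H²-L²)√(θ(1-θ))·η^{1/2} + 3((1-θ)H + θL)η − ((1-2θ)/√(θ(1-θ)))·η^{3/2}. -/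
/-! Write a feasible pair as `s = L + θ t`, `r = H - (1 - θ) t`; the deviation constraint then
reads `|t| ≤ δ := √(η / (θ (1 - θ)))`. The pair at `t = δ` has the same mean as `(r, s)` and lies
between `s` and `r` (this is where `δ ≤ H - L` enters), so `(r, s)` is a mean-preserving spread
of it, and the convexity of `x ↦ x³` on `[0, ∞)` makes `t = δ` optimal. -/

theorem weighted_cube_le_of_spread {a b u u' v v' : ℝ} (ha : 0 ≤ a) (hb : 0 ≤ b)
    (hv : 0 ≤ v) (hvv' : v ≤ v') (hv'u' : v' ≤ u') (hu'u : u' ≤ u)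
    (hmass : a * (u - u') = b * (v' - v)) :
    a * u' ^ 3 + b * v' ^ 3 ≤ a * u ^ 3 + b * v ^ 3 := by
  -- both cube differences are compared with the slope `3 v'^2` of `x³` at the middle
  have hup : 3 * v' ^ 2 * (a * (u - u')) ≤ a * (u ^ 3 - u' ^ 3) := by
    have : 3 * v' ^ 2 ≤ u ^ 2 + u * u' + u' ^ 2 := by nlinarith
    calc 3 * v' ^ 2 * (a * (u - u')) ≤ (u ^ 2 + u * u' + u' ^ 2) * (a * (u - u')) := by gcongr
      _ = a * (u ^ 3 - u' ^ 3) := by ring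
  have hdown : b * (v' ^ 3 - v ^ 3) ≤ 3 * v' ^ 2 * (b * (v' - v)) := by
    have : v' ^ 2 + v' * v + v ^ 2 ≤ 3 * v' ^ 2 := by nlinarith
    calc b * (v' ^ 3 - v ^ 3) = (v' ^ 2 + v' * v + v ^ 2) * (b * (v' - v)) := by ring
      _ ≤ 3 * v' ^ 2 * (b * (v' - v)) := by gcongr
  nlinarith

theorem abs_sub_le_of_mean_eq_of_deviation_le {θ H L r s δ : ℝ} (hθ : θ ∈ Set.Ioo (0 : ℝ) 1)
    (hδ : 0 ≤ δ) (hmean : θ * r + (1 - θ) * s = θ * H + (1 - θ) * L)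
    (hdev : θ * (r - H) ^ 2 + (1 - θ) * (s - L) ^ 2 ≤ θ * (1 - θ) * δ ^ 2) :
    |s - L| ≤ θ * δ := by
  obtain ⟨hθ0, hθ1⟩ := hθ
  have hrH : θ * (r - H) = -((1 - θ) * (s - L)) := by linarith
  have hdev_eq : θ * (θ * (r - H) ^ 2 + (1 - θ) * (s - L) ^ 2) = (1 - θ) * (s - L) ^ 2 := by
    linear_combination (θ * (r - H) - (1 - θ) * (s - L)) * hrH
  have hsq : (1 - θ) * (s - L) ^ 2 ≤ (1 - θ) * (θ * δ) ^ 2 := by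
    rw [← hdev_eq]
    nlinarith [mul_le_mul_of_nonneg_left hdev hθ0.le]
  exact abs_le_of_sq_le_sq (le_of_mul_le_mul_left hsq (by linarith)) (by positivity)

theorem isLeast_weighted_cube_of_deviation_le (θ H L δ : ℝ) (hθ : θ ∈ Set.Ioo (0 : ℝ) 1)
    (hL : 0 ≤ L) (hδ : 0 ≤ δ) (hδHL : δ ≤ H - L) :
    IsLeast {x : ℝ | ∃ r s : ℝ, 0 ≤ r ∧ 0 ≤ s ∧
        θ * r + (1 - θ) * s = θ * H + (1 - θ) * L ∧
        θ * (r - H) ^ 2 + (1 - θ) * (s - L) ^ 2 ≤ θ * (1 - θ) * δ ^ 2 ∧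
        x = θ * r ^ 3 + (1 - θ) * s ^ 3}
      (θ * (H - (1 - θ) * δ) ^ 3 + (1 - θ) * (L + θ * δ) ^ 3) := by
  obtain ⟨hθ0, hθ1⟩ := hθ
  have hmiddle : L + θ * δ ≤ H - (1 - θ) * δ := by linarith
  refine ⟨⟨H - (1 - θ) * δ, L + θ * δ, (by positivity : 0 ≤ L + θ * δ).trans hmiddle,
    by positivity, by ring, le_of_eq (by ring), rfl⟩, ?_⟩
  rintro x ⟨r, s, -, hs, hmean, hdev, rfl⟩
  have hsδ : s ≤ L + θ * δ := by
    linarith [(abs_le.1 (abs_sub_le_of_mean_eq_of_deviation_le ⟨hθ0, hθ1⟩ hδ hmean hdev)).2]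
  have hmass : θ * (r - (H - (1 - θ) * δ)) = (1 - θ) * (L + θ * δ - s) := by linear_combination hmean
  have hrδ : H - (1 - θ) * δ ≤ r := by nlinarith
  exact weighted_cube_le_of_spread hθ0.le (by linarith) hs hsδ hmiddle hrδ hmass

theorem third_moment_minimization_general (θ H L η : ℝ) (hθ : θ ∈ Set.Ioo (0 : ℝ) 1)
    (hL : 0 ≤ L) (hη : 0 ≤ η)
    (hsmall : Real.sqrt (η / (θ * (1 - θ))) ≤ H - L) :
    IsLeast {x : ℝ | ∃ r s : ℝ, 0 ≤ r ∧ 0 ≤ s ∧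
        θ * r + (1 - θ) * s = θ * H + (1 - θ) * L ∧
        θ * (r - H) ^ 2 + (1 - θ) * (s - L) ^ 2 ≤ η ∧
        x = θ * r ^ 3 + (1 - θ) * s ^ 3}
      (θ * H ^ 3 + (1 - θ) * L ^ 3
        - 3 * (H ^ 2 - L ^ 2) * Real.sqrt (θ * (1 - θ)) * Real.sqrt η
        + 3 * ((1 - θ) * H + θ * L) * η
        - ((1 - 2 * θ) / Real.sqrt (θ * (1 - θ))) * Real.sqrt η ^ 3) := by
  have hvar : 0 < θ * (1 - θ) := mul_pos hθ.1 (sub_pos.2 hθ.2)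
  have hsqrtη : √η = √(θ * (1 - θ)) * √(η / (θ * (1 - θ))) := by
    rw [Real.sqrt_div hη, mul_div_cancel₀ _ (Real.sqrt_pos.2 hvar).ne']
  set δ := √(η / (θ * (1 - θ)))
  set c := √(θ * (1 - θ))
  have hc2 : c ^ 2 = θ * (1 - θ) := Real.sq_sqrt hvar.le
  have hηδ : η = θ * (1 - θ) * δ ^ 2 := by
    rw [← Real.sq_sqrt hη, hsqrtη, mul_pow, hc2]
  have hvalue : θ * H ^ 3 + (1 - θ) * L ^ 3 - 3 * (H ^ 2 - L ^ 2) * c * √η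
        + 3 * ((1 - θ) * H + θ * L) * η - ((1 - 2 * θ) / c) * √η ^ 3
      = θ * (H - (1 - θ) * δ) ^ 3 + (1 - θ) * (L + θ * δ) ^ 3 := by
    have hcube : (1 - 2 * θ) / c * (c * δ) ^ 3 = (1 - 2 * θ) * c ^ 2 * δ ^ 3 := by
      field_simp
    rw [hsqrtη, hcube, hηδ]
    linear_combination (-3 * (H ^ 2 - L ^ 2) * δ - (1 - 2 * θ) * δ ^ 3) * hc2
  have hleast := isLeast_weighted_cube_of_deviation_le θ H L δ hθ hL (Real.sqrt_nonneg _) hsmall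
  rwa [← hvalue, ← hηδ] at hleast

theorem third_moment_minimization (θ H L η : ℝ) (hθ : θ ∈ Set.Ioo (0 : ℝ) 1)
    (hL : 0 ≤ L) (hHL : L < H) (hη : 0 ≤ η)
    (hsmall : Real.sqrt (η / (θ * (1 - θ))) ≤ H - L) :
    IsLeast {x : ℝ | ∃ r s : ℝ, 0 ≤ r ∧ 0 ≤ s ∧
        θ * r + (1 - θ) * s = θ * H + (1 - θ) * L ∧
        θ * (r - H) ^ 2 + (1 - θ) * (s - L) ^ 2 ≤ η ∧
        x = θ * r ^ 3 + (1 - θ) * s ^ 3}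
      (θ * H ^ 3 + (1 - θ) * L ^ 3
        - 3 * (H ^ 2 - L ^ 2) * Real.sqrt (θ * (1 - θ)) * Real.sqrt η
        + 3 * ((1 - θ) * H + θ * L) * η
        - ((1 - 2 * θ) / Real.sqrt (θ * (1 - θ))) * Real.sqrt η ^ 3) :=
  third_moment_minimization_general θ H L η hθ hL hη hsmall
end
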